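/- arXiv:1804.04713 — 7 statements merged into one kernel-verified Lean document; each statement's English description precedes it below -/
import Mathlib

section
/- For every natural number n and every real x, the finite Fourier transform of the n-th Legendre polynomial satisfies ∫_{-1}^{1} e^{i x t} P_n(t) dt = 2 i^n j_n(x). -/
open MeasureTheory Real Complex

/-- Spherical Bessel function of the first kind (Poisson integral representation). -/
noncomputable def sphBessel (n : ℕ) (x : ℝ) : ℝ :=
  x ^ n / (2 ^ (n + 1) * (n.factorial : ℝ)) *
    ∫ θ in (0:ℝ)..Real.pi, Real.cos (x * Real.cos θ) * Real.sin θ ^ (2 * n + 1)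

/-- Legendre polynomial via the Rodrigues formula. -/
noncomputable def legendreP (n : ℕ) : Polynomial ℝ :=
  ((1 : ℝ) / (2 ^ n * (n.factorial : ℝ))) •
    (Polynomial.derivative^[n] ((Polynomial.X ^ 2 - 1) ^ n))

/-!
By Rodrigues' formula `P_n = (2ⁿ n!)⁻¹ Dⁿ (t² - 1)ⁿ`. Every derivative of order `< n` of
`(t² - 1)ⁿ` vanishes at `±1`, so `n` integrations by parts against `e^{ixt}` leave no boundary
terms and give `(-ix)ⁿ ∫ e^{ixt} (t² - 1)ⁿ dt`. The weight is even, so only `cos (xt)` survives,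
and the substitution `t = cos θ` turns `∫ cos (xt) (1 - t²)ⁿ dt` into the Poisson integral of `j_n`.
-/

open Polynomial intervalIntegral

namespace Polynomial

theorem isRoot_iterate_derivative_pow_of_isRoot {R : Type*} [CommRing R] {q : R[X]} {s : R}
    (hq : q.IsRoot s) {m n : ℕ} (hmn : m < n) : (derivative^[m] (q ^ n)).IsRoot s :=
  dvd_iff_isRoot.mp <| (dvd_pow_self _ (Nat.sub_ne_zero_of_lt hmn)).trans <|
    pow_sub_dvd_iterate_derivative_of_pow_dvd m (pow_dvd_pow_of_dvd (dvd_iff_isRoot.mpr hq) n)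

end Polynomial

theorem intervalIntegral.integral_neg_eq_zero_of_odd {E : Type*} [NormedAddCommGroup E]
    [NormedSpace ℝ E] {f : ℝ → E} (hf : Function.Odd f) (a : ℝ) : ∫ t in -a..a, f t = 0 := by
  have h : ∫ t in -a..a, f (-t) = ∫ t in -a..a, f t := by
    simpa only [neg_neg] using integral_comp_neg (a := -a) (b := a) f
  simp only [show ∀ t, f (-t) = -f t from hf, intervalIntegral.integral_neg] at h
  have hdouble : (2 : ℝ) • ∫ t in -a..a, f t = 0 := by
    rw [two_smul]
    nth_rw 1 [← h]
    exact neg_add_cancel _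
  exact (smul_eq_zero.mp hdouble).resolve_left two_ne_zero

section FourierPolynomial

variable (c : ℂ) (a b : ℝ)

theorem integral_exp_mul_derivative_eval (p : ℝ[X]) :
    ∫ t in a..b, cexp (c * t) * (((derivative p).eval t : ℝ) : ℂ)
      = cexp (c * b) * ((p.eval b : ℝ) : ℂ) - cexp (c * a) * ((p.eval a : ℝ) : ℂ)
        - c * ∫ t in a..b, cexp (c * t) * ((p.eval t : ℝ) : ℂ) := by
  have hexp (t : ℝ) : HasDerivAt (fun t : ℝ => cexp (c * t)) (c * cexp (c * t)) t := by
    simpa [mul_comm] using (((hasDerivAt_id (t : ℂ)).const_mul c).cexp).comp_ofReal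
  have hp (t : ℝ) :
      HasDerivAt (fun t : ℝ => ((p.eval t : ℝ) : ℂ)) (((derivative p).eval t : ℝ) : ℂ) t :=
    (p.hasDerivAt t).ofReal_comp
  rw [integral_mul_deriv_eq_deriv_mul (fun t _ => hexp t) (fun t _ => hp t)
    (Continuous.intervalIntegrable (by fun_prop) _ _)
    (Continuous.intervalIntegrable (by fun_prop) _ _), ← intervalIntegral.integral_const_mul]
  simp only [mul_assoc]

variable {a b}

theorem integral_exp_mul_iterate_derivative_eval {p : ℝ[X]} {m : ℕ}
    (ha : ∀ k < m, (derivative^[k] p).IsRoot a) (hb : ∀ k < m, (derivative^[k] p).IsRoot b) :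
    ∫ t in a..b, cexp (c * t) * (((derivative^[m] p).eval t : ℝ) : ℂ)
      = (-c) ^ m * ∫ t in a..b, cexp (c * t) * ((p.eval t : ℝ) : ℂ) := by
  induction m with
  | zero => simp
  | succ m ih =>
    rw [Function.iterate_succ_apply', integral_exp_mul_derivative_eval,
      (ha m m.lt_succ_self).eq_zero, (hb m m.lt_succ_self).eq_zero,
      ih (fun k hk => ha k (hk.trans m.lt_succ_self))
      (fun k hk => hb k (hk.trans m.lt_succ_self))]
    push_cast
    ring

end FourierPolynomial

theorem integral_exp_mul_legendreP (n : ℕ) (c : ℂ) :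
    ∫ t in (-1:ℝ)..1, cexp (c * t) * (((legendreP n).eval t : ℝ) : ℂ)
      = c ^ n / (2 ^ n * n.factorial) *
          ∫ t in (-1:ℝ)..1, cexp (c * t) * (((1 - t ^ 2) ^ n : ℝ) : ℂ) := by
  have hroot {s : ℝ} (hs : s ^ 2 = 1) {k : ℕ} (hk : k < n) :
      (derivative^[k] ((X ^ 2 - 1 : ℝ[X]) ^ n)).IsRoot s :=
    isRoot_iterate_derivative_pow_of_isRoot (by simp [hs]) hk
  have hweight (t : ℝ) :
      ((((X ^ 2 - 1 : ℝ[X]) ^ n).eval t : ℝ) : ℂ) = (-1) ^ n * (((1 - t ^ 2) ^ n : ℝ) : ℂ) := by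
    rw [eval_pow, eval_sub, eval_pow, eval_X, eval_one, ← neg_sub, neg_pow]
    push_cast
    rfl
  simp only [legendreP, eval_smul, smul_eq_mul, Complex.ofReal_mul, mul_left_comm (cexp _)]
  rw [intervalIntegral.integral_const_mul, integral_exp_mul_iterate_derivative_eval c
    (fun k hk => hroot (by norm_num) hk) (fun k hk => hroot (by norm_num) hk)]
  simp only [hweight, mul_left_comm (cexp _), intervalIntegral.integral_const_mul]
  rw [← mul_assoc ((-c) ^ n), ← mul_pow, neg_mul_neg, mul_one]
  push_cast
  ring

theorem integral_exp_I_mul_mul_eq_integral_cos_mul_of_even {f : ℝ → ℝ} (hf : Function.Even f)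
    (hcont : Continuous f) (x a : ℝ) :
    ∫ t in -a..a, cexp (I * x * t) * (f t : ℂ)
      = ((∫ t in -a..a, Real.cos (x * t) * f t : ℝ) : ℂ) := by
  have hsplit (t : ℝ) : cexp (I * x * t) * (f t : ℂ)
      = ((Real.cos (x * t) * f t : ℝ) : ℂ) + ((Real.sin (x * t) * f t : ℝ) : ℂ) * I := by
    rw [show I * x * t = ((x * t : ℝ) : ℂ) * I by push_cast; ring, exp_mul_I]
    push_cast
    ring
  have hodd : Function.Odd fun t => Real.sin (x * t) * f t := fun t => by
    simp only [mul_neg, Real.sin_neg, hf t, neg_mul]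
  simp only [hsplit]
  rw [intervalIntegral.integral_add (Continuous.intervalIntegrable (by fun_prop) _ _)
    (Continuous.intervalIntegrable (by fun_prop) _ _), intervalIntegral.integral_mul_const,
    intervalIntegral.integral_ofReal, intervalIntegral.integral_ofReal,
    integral_neg_eq_zero_of_odd hodd]
  simp

theorem integral_comp_cos_mul_sin {g : ℝ → ℝ} (hg : Continuous g) :
    ∫ θ in (0:ℝ)..π, g (Real.cos θ) * Real.sin θ = ∫ t in (-1:ℝ)..1, g t := by
  have h := integral_comp_mul_deriv (a := 0) (b := π) (f' := fun θ => -Real.sin θ)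
    (fun θ _ => Real.hasDerivAt_cos θ) (by fun_prop) hg
  simp only [Function.comp_def, mul_neg, intervalIntegral.integral_neg, Real.cos_zero,
    Real.cos_pi] at h
  rw [integral_symm (-1)] at h
  exact neg_inj.mp h

theorem integral_cos_mul_cos_mul_sin_pow (n : ℕ) (x : ℝ) :
    ∫ θ in (0:ℝ)..π, Real.cos (x * Real.cos θ) * Real.sin θ ^ (2 * n + 1)
      = ∫ t in (-1:ℝ)..1, Real.cos (x * t) * (1 - t ^ 2) ^ n := by
  rw [← integral_comp_cos_mul_sin (by fun_prop)]
  congr 1 with θ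
  rw [pow_succ, pow_mul, Real.sin_sq]
  ring

theorem finite_fourier_legendre (n : ℕ) (x : ℝ) :
    ∫ t in (-1:ℝ)..1, Complex.exp (Complex.I * x * t) * (((legendreP n).eval t : ℝ) : ℂ)
      = 2 * Complex.I ^ n * (sphBessel n x : ℂ) := by
  have heven : Function.Even fun t : ℝ => (1 - t ^ 2) ^ n := fun t => by simp
  rw [integral_exp_mul_legendreP,
    integral_exp_I_mul_mul_eq_integral_cos_mul_of_even heven (by fun_prop) x 1, sphBessel,
    integral_cos_mul_cos_mul_sin_pow]
  push_cast
  field_simp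
  ring
end

section
/- For every σ > 0 and all real t, s, the series (σ/π) ∑_{n=0}^{∞} (2n+1) j_n(σ t) j_n(σ s) converges, and its sum equals sin(σ(t−s))/(π(t−s)) when t ≠ s and equals σ/π when t = s. -/
open MeasureTheory Real Complex

noncomputable def pf (n : ℕ) (x : ℝ) : ℝ :=
  ∫ u in (-1:ℝ)..1, Real.cos (x * u) * (1 - u ^ 2) ^ n

lemma sphBessel_eq (n : ℕ) (x : ℝ) :
    sphBessel n x = x ^ n / (2 ^ (n + 1) * (n.factorial : ℝ)) * pf n x := by
  have key : (∫ θ in (0:ℝ)..Real.pi, Real.cos (x * Real.cos θ) * Real.sin θ ^ (2 * n + 1))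
      = pf n x := by
    have h := intervalIntegral.integral_comp_smul_deriv
      (a := (0:ℝ)) (b := Real.pi) (f := Real.cos) (f' := fun θ => -Real.sin θ)
      (g := fun u => Real.cos (x * u) * (1 - u ^ 2) ^ n)
      (fun θ _ => (Real.hasDerivAt_cos θ)) (Continuous.continuousOn (by fun_prop))
      (by fun_prop)
    simp only [Real.cos_zero, Real.cos_pi] at h
    rw [pf, intervalIntegral.integral_symm (a := (1:ℝ)) (b := (-1:ℝ))]
    rw [← h]
    rw [← intervalIntegral.integral_neg]
    apply intervalIntegral.integral_congr
    intro θ _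
    simp only [smul_eq_mul, Function.comp]
    have : Real.sin θ ^ (2 * n + 1) = Real.sin θ * ((1:ℝ) - Real.cos θ ^ 2) ^ n := by
      rw [← Real.sin_sq θ]
      ring
    rw [this]; ring
  rw [sphBessel, key]

lemma hasDerivAt_pow_one_sub_sq (k : ℕ) (z : ℝ) :
    HasDerivAt (fun z : ℝ => (1 - z ^ 2) ^ k) (-(2 * z) * k * (1 - z ^ 2) ^ (k - 1)) z := by
  have h1 : HasDerivAt (fun z : ℝ => 1 - z ^ 2) (-(2 * z)) z := by
    simpa using ((hasDerivAt_pow 2 z).const_sub 1)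
  have := h1.pow k
  exact this.congr_deriv (by ring)

lemma hasDerivAt_sin_div (x : ℝ) (hx : x ≠ 0) (z : ℝ) :
    HasDerivAt (fun z : ℝ => Real.sin (x * z) / x) (Real.cos (x * z)) z := by
  have h1 : HasDerivAt (fun z : ℝ => x * z) x z := by
    simpa using (hasDerivAt_id z).const_mul x
  have := ((Real.hasDerivAt_sin (x * z)).comp z h1).div_const x
  refine this.congr_deriv ?_
  field_simp

lemma hasDerivAt_neg_cos_div (x : ℝ) (hx : x ≠ 0) (z : ℝ) :
    HasDerivAt (fun z : ℝ => -(Real.cos (x * z) / x)) (Real.sin (x * z)) z := by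
  have h1 : HasDerivAt (fun z : ℝ => x * z) x z := by
    simpa using (hasDerivAt_id z).const_mul x
  have := (((Real.hasDerivAt_cos (x * z)).comp z h1).div_const x).neg
  refine this.congr_deriv ?_
  field_simp

lemma ibp_a (n : ℕ) (x : ℝ) (hx : x ≠ 0) :
    pf (n + 1) x
      = (2 * (n + 1) / x) * ∫ z in (-1:ℝ)..1, Real.sin (x * z) * (z * (1 - z ^ 2) ^ n) := by
  have h := intervalIntegral.integral_mul_deriv_eq_deriv_mul
    (a := (-1:ℝ)) (b := 1)
    (u := fun z => (1 - z ^ 2) ^ (n + 1))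
    (u' := fun z => -(2 * z) * (n + 1) * (1 - z ^ 2) ^ n)
    (v := fun z => Real.sin (x * z) / x) (v' := fun z => Real.cos (x * z))
    (fun z _ => by simpa using hasDerivAt_pow_one_sub_sq (n + 1) z)
    (fun z _ => hasDerivAt_sin_div x hx z)
    (Continuous.intervalIntegrable (by fun_prop) _ _)
    (Continuous.intervalIntegrable (by fun_prop) _ _)
  have hpf : pf (n + 1) x = ∫ z in (-1:ℝ)..1, (1 - z ^ 2) ^ (n + 1) * Real.cos (x * z) := by
    rw [pf]; apply intervalIntegral.integral_congr; intro z _; ring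
  rw [hpf, h]
  simp only [one_pow, neg_one_sq]
  norm_num
  rw [← intervalIntegral.integral_const_mul]
  apply intervalIntegral.integral_congr; intro z _
  simp only
  field_simp

lemma ibp_b0 (x : ℝ) (hx : x ≠ 0) :
    (∫ z in (-1:ℝ)..1, Real.sin (x * z) * (z * (1 - z ^ 2) ^ 0))
      = -(2 * Real.cos x) / x + pf 0 x / x := by
  have h := intervalIntegral.integral_mul_deriv_eq_deriv_mul
    (a := (-1:ℝ)) (b := 1)
    (u := fun z : ℝ => z) (u' := fun _ => (1:ℝ))
    (v := fun z => -(Real.cos (x * z) / x)) (v' := fun z => Real.sin (x * z))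
    (fun z _ => hasDerivAt_id z)
    (fun z _ => hasDerivAt_neg_cos_div x hx z)
    (Continuous.intervalIntegrable (by fun_prop) _ _)
    (Continuous.intervalIntegrable (by fun_prop) _ _)
  have h2 : (∫ z in (-1:ℝ)..1, Real.sin (x * z) * (z * (1 - z ^ 2) ^ 0))
      = ∫ z in (-1:ℝ)..1, z * Real.sin (x * z) := by
    apply intervalIntegral.integral_congr; intro z _; simp; ring
  rw [h2, h]
  have h3 : (∫ z in (-1:ℝ)..1, (1:ℝ) * -(Real.cos (x * z) / x)) = -(pf 0 x / x) := by
    rw [pf]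
    rw [show (fun z : ℝ => (1:ℝ) * -(Real.cos (x * z) / x))
        = fun z : ℝ => (-(1/x)) * (Real.cos (x * z) * (1 - z ^ 2) ^ 0) by
      funext z; simp; ring]
    rw [intervalIntegral.integral_const_mul]
    ring
  rw [h3]
  simp [mul_comm x 1, mul_neg_one]
  ring

lemma ibp_b1 (m : ℕ) (x : ℝ) (hx : x ≠ 0) :
    (∫ z in (-1:ℝ)..1, Real.sin (x * z) * (z * (1 - z ^ 2) ^ (m + 1)))
      = (1 / x) * ((2 * (m:ℝ) + 3) * pf (m + 1) x - (2 * (m:ℝ) + 2) * pf m x) := by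
  have hder : ∀ z : ℝ, HasDerivAt (fun z : ℝ => z * (1 - z ^ 2) ^ (m + 1))
      ((2 * (m:ℝ) + 3) * (1 - z ^ 2) ^ (m + 1) - (2 * (m:ℝ) + 2) * (1 - z ^ 2) ^ m) z := by
    intro z
    have := (hasDerivAt_id z).mul (hasDerivAt_pow_one_sub_sq (m + 1) z)
    refine HasDerivAt.congr_deriv this ?_
    simp only [Nat.add_sub_cancel, id_eq]
    push_cast
    have : ((1:ℝ) - z ^ 2) ^ (m + 1) = (1 - z ^ 2) ^ m * (1 - z ^ 2) := pow_succ _ _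
    rw [this]
    ring
  have h := intervalIntegral.integral_mul_deriv_eq_deriv_mul
    (a := (-1:ℝ)) (b := 1)
    (u := fun z : ℝ => z * (1 - z ^ 2) ^ (m + 1))
    (u' := fun z => (2 * (m:ℝ) + 3) * (1 - z ^ 2) ^ (m + 1) - (2 * (m:ℝ) + 2) * (1 - z ^ 2) ^ m)
    (v := fun z => -(Real.cos (x * z) / x)) (v' := fun z => Real.sin (x * z))
    (fun z _ => hder z)
    (fun z _ => hasDerivAt_neg_cos_div x hx z)
    (Continuous.intervalIntegrable (by fun_prop) _ _)
    (Continuous.intervalIntegrable (by fun_prop) _ _)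
  have h2 : (∫ z in (-1:ℝ)..1, Real.sin (x * z) * (z * (1 - z ^ 2) ^ (m + 1)))
      = ∫ z in (-1:ℝ)..1, (z * (1 - z ^ 2) ^ (m + 1)) * Real.sin (x * z) := by
    apply intervalIntegral.integral_congr; intro z _; ring
  rw [h2, h]
  simp only [one_pow, neg_one_sq]
  norm_num
  have h3 : (∫ z in (-1:ℝ)..1,
      ((2 * (m:ℝ) + 3) * (1 - z ^ 2) ^ (m + 1) - (2 * (m:ℝ) + 2) * (1 - z ^ 2) ^ m)
        * (Real.cos (x * z) / x))
      = (1 / x) * ((2 * (m:ℝ) + 3) * pf (m + 1) x - (2 * (m:ℝ) + 2) * pf m x) := by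
    have h4 : (∫ z in (-1:ℝ)..1,
        ((2 * (m:ℝ) + 3) * (1 - z ^ 2) ^ (m + 1) - (2 * (m:ℝ) + 2) * (1 - z ^ 2) ^ m)
          * (Real.cos (x * z) / x))
        = ∫ z in (-1:ℝ)..1, (1/x) * ((2 * (m:ℝ) + 3) * (Real.cos (x * z) * (1 - z ^ 2) ^ (m + 1))
            - (2 * (m:ℝ) + 2) * (Real.cos (x * z) * (1 - z ^ 2) ^ m)) := by
      apply intervalIntegral.integral_congr; intro z _
      field_simp
    rw [h4, intervalIntegral.integral_const_mul, intervalIntegral.integral_sub,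
        intervalIntegral.integral_const_mul, intervalIntegral.integral_const_mul]
    · rw [pf, pf]
    · exact Continuous.intervalIntegrable (by fun_prop) _ _
    · exact Continuous.intervalIntegrable (by fun_prop) _ _
  rw [h3]
  ring

lemma pf_rec0 (x : ℝ) (hx : x ≠ 0) :
    pf 1 x = (2 / x) * (-(2 * Real.cos x) / x + pf 0 x / x) := by
  have h := ibp_a 0 x hx
  rw [ibp_b0 x hx] at h
  norm_num at h
  convert h using 2

lemma pf_recS (m : ℕ) (x : ℝ) (hx : x ≠ 0) :
    pf (m + 2) x = (2 * ((m:ℝ) + 2) / x) *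
      ((1 / x) * ((2 * (m:ℝ) + 3) * pf (m + 1) x - (2 * (m:ℝ) + 2) * pf m x)) := by
  have h := ibp_a (m + 1) x hx
  rw [ibp_b1 m x hx] at h
  push_cast at h
  convert h using 2
  ring

lemma sphBessel_zero (x : ℝ) (hx : x ≠ 0) : sphBessel 0 x = Real.sin x / x := by
  have hpf : pf 0 x = 2 * Real.sin x / x := by
    have h : ∀ z ∈ Set.uIcc (-1:ℝ) 1, HasDerivAt (fun z : ℝ => Real.sin (x * z) / x)
        (Real.cos (x * z)) z := fun z _ => hasDerivAt_sin_div x hx z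
    have := intervalIntegral.integral_eq_sub_of_hasDerivAt h
      (Continuous.intervalIntegrable (by fun_prop) _ _)
    rw [pf]
    simp only [pow_zero, mul_one]
    rw [this]
    rw [mul_neg_one, Real.sin_neg]
    ring
  rw [sphBessel_eq, hpf]
  norm_num [Nat.factorial]
  ring

lemma sphBessel_zero_zero : sphBessel 0 0 = 1 := by
  rw [sphBessel]
  norm_num [Nat.factorial]

lemma sphBessel_succ_zero (n : ℕ) : sphBessel (n + 1) 0 = 0 := by
  simp [sphBessel]

lemma sphBessel_bound (n : ℕ) (x : ℝ) :
    |sphBessel n x| ≤ Real.pi * |x| ^ n / (2 ^ (n + 1) * n.factorial) := by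
  have hI : |∫ θ in (0:ℝ)..Real.pi, Real.cos (x * Real.cos θ) * Real.sin θ ^ (2 * n + 1)|
      ≤ Real.pi := by
    have h := intervalIntegral.norm_integral_le_of_norm_le_const (a := (0:ℝ)) (b := Real.pi)
      (C := 1) (f := fun θ => Real.cos (x * Real.cos θ) * Real.sin θ ^ (2 * n + 1)) ?_
    · simpa [_root_.abs_of_nonneg Real.pi_pos.le] using h
    · intro θ _
      rw [Real.norm_eq_abs, _root_.abs_mul, _root_.abs_pow]
      have h1 : |Real.cos (x * Real.cos θ)| ≤ 1 := Real.abs_cos_le_one _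
      have h2 : |Real.sin θ| ^ (2 * n + 1) ≤ 1 :=
        pow_le_one₀ (_root_.abs_nonneg _) (Real.abs_sin_le_one _)
      nlinarith [_root_.abs_nonneg (Real.cos (x * Real.cos θ)), _root_.abs_nonneg (Real.sin θ),
        pow_nonneg (_root_.abs_nonneg (Real.sin θ)) (2 * n + 1)]
  rw [sphBessel, _root_.abs_mul]
  have h3 : |x ^ n / (2 ^ (n + 1) * (n.factorial : ℝ))|
      = |x| ^ n / (2 ^ (n + 1) * (n.factorial : ℝ)) := by
    rw [_root_.abs_div, _root_.abs_pow]
    congr 1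
    exact _root_.abs_of_pos (by positivity)
  rw [h3]
  rw [div_mul_eq_mul_div, show Real.pi * |x| ^ n = |x| ^ n * Real.pi by ring]
  gcongr

lemma summable_aux (c : ℝ) (hc : 0 ≤ c) :
    Summable (fun n : ℕ => (2 * (n:ℝ) + 1) * c ^ n / n.factorial) := by
  refine Summable.of_nonneg_of_le (fun n => by positivity) (fun n => ?_)
    ((Real.summable_pow_div_factorial (2 * c)).mul_left 2)
  · 
    have h1 : (2 * (n:ℝ) + 1) ≤ 2 ^ (n + 1) := by
      have h2 : ((n:ℝ)) + 1 ≤ 2 ^ n := by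
        exact_mod_cast Nat.succ_le_of_lt (Nat.lt_two_pow_self (n := n))
      have h3 : (2:ℝ) ^ (n+1) = 2 * 2 ^ n := by ring
      nlinarith
    have h2 : (2 * c) ^ n = 2 ^ n * c ^ n := mul_pow 2 c n
    calc (2 * (n:ℝ) + 1) * c ^ n / n.factorial
        ≤ 2 ^ (n + 1) * c ^ n / n.factorial := by gcongr
      _ = 2 * ((2 * c) ^ n / n.factorial) := by rw [h2]; ring

lemma term_bound (n : ℕ) (x y : ℝ) :
    |(2 * (n:ℝ) + 1) * sphBessel n x * sphBessel n y|
      ≤ (Real.pi ^ 2 / 4) * ((2 * (n:ℝ) + 1) * (|x| * |y| / 4) ^ n / n.factorial) := by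
  have bx := sphBessel_bound n x
  have by' := sphBessel_bound n y
  have h1 : |(2 * (n:ℝ) + 1) * sphBessel n x * sphBessel n y|
      = (2 * (n:ℝ) + 1) * |sphBessel n x| * |sphBessel n y| := by
    rw [_root_.abs_mul, _root_.abs_mul, _root_.abs_of_nonneg (by positivity : (0:ℝ) ≤ 2 * (n:ℝ) + 1)]
  rw [h1]
  have key : (Real.pi * |x| ^ n / (2 ^ (n + 1) * n.factorial))
      * (Real.pi * |y| ^ n / (2 ^ (n + 1) * n.factorial))
      ≤ (Real.pi ^ 2 / 4) * ((|x| * |y| / 4) ^ n / n.factorial) := by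
    have hfn : (1:ℝ) ≤ n.factorial := by exact_mod_cast n.factorial_pos
    have e1 : (Real.pi * |x| ^ n / (2 ^ (n + 1) * n.factorial))
        * (Real.pi * |y| ^ n / (2 ^ (n + 1) * n.factorial))
        = (Real.pi ^ 2 / 4) * ((|x| * |y| / 4) ^ n / (n.factorial * n.factorial)) := by
      rw [div_pow, mul_pow]
      field_simp
      rw [show ((4:ℝ)) ^ n = 2 ^ (n * 2) by
        rw [show (4:ℝ) = 2 ^ 2 by norm_num, ← pow_mul, Nat.mul_comm]]
      ring
    rw [e1]
    have hfn2 : (n.factorial : ℝ) ≤ (n.factorial : ℝ) * n.factorial := by nlinarith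
    have := div_le_div_of_nonneg_left
      (show (0:ℝ) ≤ (|x| * |y| / 4) ^ n by positivity)
      (show (0:ℝ) < n.factorial by exact_mod_cast n.factorial_pos) hfn2
    nlinarith [Real.pi_pos]
  calc (2 * (n:ℝ) + 1) * |sphBessel n x| * |sphBessel n y|
      ≤ (2 * (n:ℝ) + 1) * ((Real.pi * |x| ^ n / (2 ^ (n + 1) * n.factorial))
          * (Real.pi * |y| ^ n / (2 ^ (n + 1) * n.factorial))) := by
        have hb1 : (0:ℝ) ≤ 2 * (n:ℝ) + 1 := by positivity
        have := mul_le_mul bx by' (_root_.abs_nonneg _) (by positivity)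
        nlinarith [_root_.abs_nonneg (sphBessel n x), _root_.abs_nonneg (sphBessel n y)]
    _ ≤ (2 * (n:ℝ) + 1) * ((Real.pi ^ 2 / 4) * ((|x| * |y| / 4) ^ n / n.factorial)) := by
        gcongr
    _ = (Real.pi ^ 2 / 4) * ((2 * (n:ℝ) + 1) * (|x| * |y| / 4) ^ n / n.factorial) := by ring

lemma summable_term (x y : ℝ) :
    Summable (fun n : ℕ => (2 * (n:ℝ) + 1) * sphBessel n x * sphBessel n y) := by
  apply Summable.of_norm
  refine Summable.of_nonneg_of_le (fun n => norm_nonneg _) (fun n => ?_)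
    ((summable_aux (|x| * |y| / 4) (by positivity)).mul_left (Real.pi ^ 2 / 4))
  rw [Real.norm_eq_abs]
  exact term_bound n x y

lemma sphBessel_tendsto_zero (x : ℝ) :
    Filter.Tendsto (fun n => sphBessel n x) Filter.atTop (nhds 0) := by
  have hg : Filter.Tendsto (fun n : ℕ => Real.pi * (|x| ^ n / n.factorial))
      Filter.atTop (nhds 0) := by
    have := (FloorSemiring.tendsto_pow_div_factorial_atTop (K := ℝ) (|x|)).const_mul Real.pi
    simpa using this
  refine squeeze_zero_norm (fun n => ?_) hg
  rw [Real.norm_eq_abs]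
  refine le_trans (sphBessel_bound n x) ?_
  rw [← mul_div_assoc]
  have hfn : (0:ℝ) < n.factorial := by exact_mod_cast n.factorial_pos
  apply div_le_div_of_nonneg_left (by positivity) hfn
  nlinarith [pow_pos (show (0:ℝ) < 2 by norm_num) (n+1),
    one_le_pow₀ (show (1:ℝ) ≤ 2 by norm_num) (n := n+1)]

lemma rec0 (x : ℝ) (hx : x ≠ 0) :
    Real.cos x / x + sphBessel 1 x = 1 / x * sphBessel 0 x := by
  rw [sphBessel_eq 1, sphBessel_eq 0, pf_rec0 x hx]
  norm_num [Nat.factorial]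
  field_simp
  ring

lemma recS (n : ℕ) (x : ℝ) (hx : x ≠ 0) :
    sphBessel n x + sphBessel (n + 2) x = (2 * (n:ℝ) + 3) / x * sphBessel (n + 1) x := by
  rw [sphBessel_eq n, sphBessel_eq (n + 2), sphBessel_eq (n + 1), pf_recS n x hx]
  have hf0 : ((n.factorial : ℝ)) ≠ 0 := Nat.cast_ne_zero.mpr n.factorial_ne_zero
  have h1 : ((n + 1).factorial : ℝ) = ((n:ℝ) + 1) * n.factorial := by
    rw [Nat.factorial_succ]; push_cast; ring
  have h2 : ((n + 2).factorial : ℝ) = ((n:ℝ) + 2) * (((n:ℝ) + 1) * n.factorial) := by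
    rw [show n + 2 = (n + 1) + 1 from rfl, Nat.factorial_succ, Nat.factorial_succ]
    push_cast; ring
  rw [h1, h2]
  have hn1 : ((n:ℝ) + 1) ≠ 0 := by positivity
  have hn2 : ((n:ℝ) + 2) ≠ 0 := by positivity
  have h2p : ((2:ℝ)) ^ (n + 1) ≠ 0 := by positivity
  have h2p2 : ((2:ℝ)) ^ (n + 2 + 1) = 4 * 2 ^ (n + 1) := by ring
  have h2p3 : ((2:ℝ)) ^ (n + 1 + 1) = 2 * 2 ^ (n + 1) := by ring
  rw [h2p2, h2p3]
  field_simp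
  ring

noncomputable def Jm : ℕ → ℝ → ℝ
  | 0, x => Real.cos x / x
  | (n + 1), x => sphBessel n x

lemma Jm_rec (x : ℝ) (hx : x ≠ 0) (n : ℕ) :
    Jm n x + Jm (n + 2) x = (2 * (n:ℝ) + 1) / x * Jm (n + 1) x := by
  cases n with
  | zero => simpa [Jm] using rec0 x hx
  | succ m =>
    show sphBessel m x + sphBessel (m + 2) x
      = (2 * (((m:ℕ) + 1 : ℕ) : ℝ) + 1) / x * sphBessel (m + 1) x
    rw [show (((m:ℕ) + 1 : ℕ) : ℝ) = (m:ℝ) + 1 by push_cast; ring, recS m x hx]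
    ring

theorem key_hasSum (x y : ℝ) (hxy : x ≠ y) :
    HasSum (fun n : ℕ => (2 * (n:ℝ) + 1) * sphBessel n x * sphBessel n y)
      (Real.sin (x - y) / (x - y)) := by
  rcases eq_or_ne x 0 with rfl | hx
  · have hy : y ≠ 0 := fun h => hxy h.symm
    have h := hasSum_single (f := fun n : ℕ => (2 * (n:ℝ) + 1) * sphBessel n 0 * sphBessel n y)
      0 (fun b hb => by
        obtain ⟨m, rfl⟩ := Nat.exists_eq_succ_of_ne_zero hb
        simp [sphBessel_succ_zero])
    have he : (2 * ((0:ℕ):ℝ) + 1) * sphBessel 0 0 * sphBessel 0 y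
        = Real.sin (0 - y) / (0 - y) := by
      rw [sphBessel_zero_zero, sphBessel_zero y hy]
      rw [zero_sub, Real.sin_neg]
      norm_num
    rw [← he]
    exact h
  rcases eq_or_ne y 0 with rfl | hy
  · have h := hasSum_single (f := fun n : ℕ => (2 * (n:ℝ) + 1) * sphBessel n x * sphBessel n 0)
      0 (fun b hb => by
        obtain ⟨m, rfl⟩ := Nat.exists_eq_succ_of_ne_zero hb
        simp [sphBessel_succ_zero])
    have he : (2 * ((0:ℕ):ℝ) + 1) * sphBessel 0 x * sphBessel 0 0
        = Real.sin (x - 0) / (x - 0) := by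
      rw [sphBessel_zero_zero, sphBessel_zero x hx]
      norm_num
    rw [← he]
    exact h
  · -- main case
    set term : ℕ → ℝ := fun n => (2 * (n:ℝ) + 1) * sphBessel n x * sphBessel n y with hterm
    have hsummable : Summable term := summable_term x y
    set B : ℕ → ℝ := fun n => Jm n x * Jm (n + 1) y - Jm (n + 1) x * Jm n y with hB
    have hstep : ∀ n : ℕ, (1 / x - 1 / y) * term n = B n - B (n + 1) := by
      intro n
      have hXx := Jm_rec x hx n
      have hXy := Jm_rec y hy n
      have e1 : Jm (n + 2) x = (2 * (n:ℝ) + 1) / x * Jm (n + 1) x - Jm n x := by linarith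
      have e2 : Jm (n + 2) y = (2 * (n:ℝ) + 1) / y * Jm (n + 1) y - Jm n y := by linarith
      have hJx : sphBessel n x = Jm (n + 1) x := rfl
      have hJy : sphBessel n y = Jm (n + 1) y := rfl
      have hBn1 : B (n + 1) = Jm (n + 1) x * Jm (n + 2) y - Jm (n + 2) x * Jm (n + 1) y := rfl
      rw [hterm, hBn1, hB]
      simp only [hJx, hJy]
      rw [e1, e2]
      field_simp
      ring
    have htel : ∀ N : ℕ, (1 / x - 1 / y) * (∑ n ∈ Finset.range N, term n) = B 0 - B N := by
      intro N
      rw [Finset.mul_sum]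
      rw [Finset.sum_congr rfl (fun n _ => hstep n)]
      exact Finset.sum_range_sub' B N
    have hBlim : Filter.Tendsto B Filter.atTop (nhds 0) := by
      rw [← Filter.tendsto_add_atTop_iff_nat 1]
      have hx0 := sphBessel_tendsto_zero x
      have hy0 := sphBessel_tendsto_zero y
      have hx1 : Filter.Tendsto (fun n => sphBessel (n + 1) x) Filter.atTop (nhds 0) :=
        (Filter.tendsto_add_atTop_iff_nat 1).mpr hx0
      have hy1 : Filter.Tendsto (fun n => sphBessel (n + 1) y) Filter.atTop (nhds 0) :=
        (Filter.tendsto_add_atTop_iff_nat 1).mpr hy0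
      have : Filter.Tendsto (fun n => sphBessel n x * sphBessel (n + 1) y
          - sphBessel (n + 1) x * sphBessel n y) Filter.atTop (nhds 0) := by
        have := (hx0.mul hy1).sub (hx1.mul hy0)
        simpa using this
      exact this
    have hlim1 : Filter.Tendsto (fun N => (1 / x - 1 / y) * (∑ n ∈ Finset.range N, term n))
        Filter.atTop (nhds (B 0)) := by
      simp only [htel]
      have := Filter.Tendsto.sub (tendsto_const_nhds (x := B 0) (f := Filter.atTop)) hBlim
      simpa using this
    have hlim2 : Filter.Tendsto (fun N => (1 / x - 1 / y) * (∑ n ∈ Finset.range N, term n))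
        Filter.atTop (nhds ((1 / x - 1 / y) * ∑' n, term n)) :=
      (hsummable.hasSum.tendsto_sum_nat).const_mul _
    have hkey : (1 / x - 1 / y) * ∑' n, term n = B 0 := tendsto_nhds_unique hlim2 hlim1
    have hxy' : (1 / x - 1 / y) ≠ 0 := by
      rw [div_sub_div 1 1 hx hy]
      apply div_ne_zero
      · simpa using sub_ne_zero_of_ne (Ne.symm hxy)
      · exact mul_ne_zero hx hy
    have hsub : x - y ≠ 0 := sub_ne_zero_of_ne hxy
    have htsum : (∑' n, term n) = Real.sin (x - y) / (x - y) := by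
      apply mul_left_cancel₀ hxy'
      rw [hkey, hB]
      show Jm 0 x * Jm 1 y - Jm 1 x * Jm 0 y = _
      show Real.cos x / x * sphBessel 0 y - sphBessel 0 x * (Real.cos y / y) = _
      rw [sphBessel_zero x hx, sphBessel_zero y hy, Real.sin_sub]
      field_simp
      ring
    rw [← htsum]
    exact hsummable.hasSum

lemma sphBessel_continuous (n : ℕ) : Continuous (fun x => sphBessel n x) := by
  unfold sphBessel
  apply Continuous.mul
  · fun_prop
  · exact intervalIntegral.continuous_parametric_intervalIntegral_of_continuous'
      (μ := MeasureTheory.volume)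
      (f := fun x θ => Real.cos (x * Real.cos θ) * Real.sin θ ^ (2 * n + 1))
      (by fun_prop) 0 Real.pi

theorem diag_hasSum (x : ℝ) :
    HasSum (fun n : ℕ => (2 * (n:ℝ) + 1) * sphBessel n x * sphBessel n x) 1 := by
  rcases eq_or_ne x 0 with rfl | hx
  · have h := hasSum_single (f := fun n : ℕ => (2 * (n:ℝ) + 1) * sphBessel n 0 * sphBessel n 0)
      0 (fun b hb => by
        obtain ⟨m, rfl⟩ := Nat.exists_eq_succ_of_ne_zero hb
        simp [sphBessel_succ_zero])
    convert h using 1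
    rw [sphBessel_zero_zero]
    norm_num
  · set T : ℝ → ℝ := fun y => ∑' n : ℕ, (2 * (n:ℝ) + 1) * sphBessel n x * sphBessel n y
      with hT
    set R : ℝ := |x| + 1 with hR
    have hcont : ContinuousOn T (Metric.closedBall x 1) := by
      apply continuousOn_tsum
        (u := fun n : ℕ => (Real.pi ^ 2 / 4) * ((2 * (n:ℝ) + 1) * (|x| * R / 4) ^ n / n.factorial))
      · intro n
        exact (Continuous.continuousOn (by
          have := sphBessel_continuous n
          fun_prop))
      · exact (summable_aux (|x| * R / 4) (by positivity)).mul_left _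
      · intro n y hy
        have hyR : |y| ≤ R := by
          have : |y - x| ≤ 1 := by
            rw [← Real.dist_eq]
            exact Metric.mem_closedBall.mp hy
          have h2 := _root_.abs_sub_abs_le_abs_sub y x
          rw [hR]
          linarith
        rw [Real.norm_eq_abs]
        refine le_trans (term_bound n x y) ?_
        gcongr
    have hmem : Metric.closedBall x 1 ∈ nhds x := Metric.closedBall_mem_nhds x one_pos
    have hCA : ContinuousAt T x := hcont.continuousAt hmem
    have h1 : Filter.Tendsto T (nhdsWithin x {x}ᶜ) (nhds (T x)) :=
      hCA.tendsto.mono_left nhdsWithin_le_nhds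
    have hslope : Filter.Tendsto (fun t : ℝ => Real.sin t / t) (nhdsWithin 0 {(0:ℝ)}ᶜ)
        (nhds 1) := by
      have h := hasDerivAt_iff_tendsto_slope.mp (Real.hasDerivAt_sin 0)
      rw [Real.cos_zero] at h
      refine h.congr' ?_
      filter_upwards [self_mem_nhdsWithin] with t ht
      rw [slope_def_field]
      simp
    have hmap : Filter.Tendsto (fun y : ℝ => x - y) (nhdsWithin x {x}ᶜ)
        (nhdsWithin 0 {(0:ℝ)}ᶜ) := by
      rw [tendsto_nhdsWithin_iff]
      constructor
      · have h0 : Filter.Tendsto (fun y : ℝ => x - y) (nhds x) (nhds (x - x)) :=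
          (continuous_const.sub continuous_id).tendsto x
        simpa using h0.mono_left nhdsWithin_le_nhds
      · filter_upwards [self_mem_nhdsWithin] with y hy
        simp only [Set.mem_compl_iff, Set.mem_singleton_iff] at hy ⊢
        exact sub_ne_zero_of_ne (Ne.symm hy)
    have h2 : Filter.Tendsto T (nhdsWithin x {x}ᶜ) (nhds 1) := by
      refine Filter.Tendsto.congr' ?_ (hslope.comp hmap)
      filter_upwards [self_mem_nhdsWithin] with y hy
      have hyx : y ≠ x := by simpa using hy
      have := (key_hasSum x y (Ne.symm hyx)).tsum_eq
      simpa [Function.comp] using this.symm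
    have hTx : T x = 1 := tendsto_nhds_unique h1 h2
    have hh : HasSum (fun n : ℕ => (2 * (n:ℝ) + 1) * sphBessel n x * sphBessel n x) (T x) :=
      (summable_term x x).hasSum
    rw [hTx] at hh
    exact hh

theorem sinc_kernel_sphBessel_expansion (σ : ℝ) (hσ : 0 < σ) (t s : ℝ) :
    HasSum
      (fun n : ℕ => (σ / Real.pi) * (2 * (n : ℝ) + 1) * sphBessel n (σ * t) * sphBessel n (σ * s))
      (if t = s then σ / Real.pi else Real.sin (σ * (t - s)) / (Real.pi * (t - s))) := by
  have hσ0 : σ ≠ 0 := ne_of_gt hσ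
  have hπ : Real.pi ≠ 0 := Real.pi_ne_zero
  by_cases hts : t = s
  · subst hts
    rw [if_pos rfl]
    have h := (diag_hasSum (σ * t)).mul_left (σ / Real.pi)
    rw [mul_one] at h
    have he : (fun n : ℕ => (σ / Real.pi)
          * ((2 * (n:ℝ) + 1) * sphBessel n (σ * t) * sphBessel n (σ * t)))
        = fun n : ℕ => (σ / Real.pi) * (2 * (n:ℝ) + 1) * sphBessel n (σ * t)
          * sphBessel n (σ * t) := by
      funext n; ring
    rw [he] at h
    exact h
  · rw [if_neg hts]
    have hne : σ * t ≠ σ * s := fun h => hts (mul_left_cancel₀ hσ0 h)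
    have h := (key_hasSum (σ * t) (σ * s) hne).mul_left (σ / Real.pi)
    have he : (fun n : ℕ => (σ / Real.pi)
          * ((2 * (n:ℝ) + 1) * sphBessel n (σ * t) * sphBessel n (σ * s)))
        = fun n : ℕ => (σ / Real.pi) * (2 * (n:ℝ) + 1) * sphBessel n (σ * t)
          * sphBessel n (σ * s) := by
      funext n; ring
    rw [he] at h
    have hval : (σ / Real.pi) * (Real.sin (σ * t - σ * s) / (σ * t - σ * s))
        = Real.sin (σ * (t - s)) / (Real.pi * (t - s)) := by
      have h1 : σ * t - σ * s = σ * (t - s) := by ring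
      rw [h1]
      have hts' : t - s ≠ 0 := sub_ne_zero_of_ne hts
      field_simp
    rw [hval] at h
    exact h
end

section
/- For every σ > 0 and all m, n ∈ ℕ, the matrix entry satisfies the estimate |J_{mn}| ≤ (√((2m+1)(2n+1)) / (π(m+n+1))) · (4 σ^{m+n+1} / ((2m+1)!! (2n+1)!!)), where (2k+1)!! = 1·3·5···(2k+1) denotes the double factorial. -/
open MeasureTheory Real Complex

/-- Normalized spherical Bessel functions. -/
noncomputable def jbar (σ : ℝ) (n : ℕ) (t : ℝ) : ℝ :=
  Real.sqrt (σ * (2 * (n : ℝ) + 1) / Real.pi) * sphBessel n (σ * t)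

/-- The matrix of overlap integrals of the normalized spherical Bessel functions on (-1,1). -/
noncomputable def Jmat (σ : ℝ) (m n : ℕ) : ℝ :=
  ∫ s in (-1:ℝ)..1, jbar σ m s * jbar σ n s

lemma dfac_pos (k : ℕ) : (0:ℝ) < (Nat.doubleFactorial k : ℝ) := by
  exact_mod_cast Nat.doubleFactorial_pos k

lemma prod_eq_dfac (n : ℕ) :
    ∏ i ∈ Finset.range n, ((2 * (i:ℝ) + 2) / (2 * i + 3)) =
      2 ^ n * (n.factorial : ℝ) / (Nat.doubleFactorial (2 * n + 1) : ℝ) := by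
  induction n with
  | zero => simp [Nat.doubleFactorial]
  | succ k ih =>
    rw [Finset.prod_range_succ, ih]
    have h1 : 2 * (k + 1) + 1 = (2 * k + 1) + 2 := by ring
    rw [h1, Nat.doubleFactorial_add_two, Nat.factorial_succ]
    have hd := dfac_pos (2 * k + 1)
    have h3 : (2 * (k:ℝ) + 3) ≠ 0 := by positivity
    push_cast
    field_simp
    ring

lemma integral_sin_odd (n : ℕ) :
    (∫ x in (0:ℝ)..Real.pi, Real.sin x ^ (2 * n + 1)) =
      2 ^ (n + 1) * (n.factorial : ℝ) / (Nat.doubleFactorial (2 * n + 1) : ℝ) := by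
  rw [integral_sin_pow_odd, prod_eq_dfac]
  ring

lemma sphBessel_abs_le (n : ℕ) (x : ℝ) :
    |sphBessel n x| ≤ |x| ^ n / (Nat.doubleFactorial (2 * n + 1) : ℝ) := by
  have hd := dfac_pos (2 * n + 1)
  have hf : (0:ℝ) < (n.factorial : ℝ) := by exact_mod_cast n.factorial_pos
  have hI : |∫ θ in (0:ℝ)..Real.pi, Real.cos (x * Real.cos θ) * Real.sin θ ^ (2 * n + 1)|
      ≤ 2 ^ (n + 1) * (n.factorial : ℝ) / (Nat.doubleFactorial (2 * n + 1) : ℝ) := by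
    rw [← integral_sin_odd n]
    rw [← Real.norm_eq_abs, ← _root_.abs_of_pos (integral_sin_pow_pos (n := 2 * n + 1))]
    apply intervalIntegral.norm_integral_le_abs_of_norm_le
    · filter_upwards [MeasureTheory.ae_restrict_mem measurableSet_uIoc] with t ht
      have ht' : t ∈ Set.Ioc (0:ℝ) Real.pi := by
        rwa [Set.uIoc_of_le Real.pi_pos.le] at ht
      have hs : 0 ≤ Real.sin t := Real.sin_nonneg_of_nonneg_of_le_pi ht'.1.le ht'.2
      rw [Real.norm_eq_abs, abs_mul, _root_.abs_pow, _root_.abs_of_nonneg hs]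
      calc |Real.cos (x * Real.cos t)| * Real.sin t ^ (2 * n + 1)
          ≤ 1 * Real.sin t ^ (2 * n + 1) := by
            gcongr; exact Real.abs_cos_le_one _
        _ = Real.sin t ^ (2 * n + 1) := one_mul _
    · exact (Continuous.intervalIntegrable (by continuity) 0 Real.pi)
  have : |sphBessel n x|
      = |x| ^ n / (2 ^ (n + 1) * (n.factorial : ℝ)) *
        |∫ θ in (0:ℝ)..Real.pi, Real.cos (x * Real.cos θ) * Real.sin θ ^ (2 * n + 1)| := by
    rw [sphBessel, abs_mul, abs_div, _root_.abs_pow]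
    congr 2
    rw [_root_.abs_of_pos (by positivity)]
  rw [this]
  calc |x| ^ n / (2 ^ (n + 1) * (n.factorial : ℝ)) *
        |∫ θ in (0:ℝ)..Real.pi, Real.cos (x * Real.cos θ) * Real.sin θ ^ (2 * n + 1)|
      ≤ |x| ^ n / (2 ^ (n + 1) * (n.factorial : ℝ)) *
          (2 ^ (n + 1) * (n.factorial : ℝ) / (Nat.doubleFactorial (2 * n + 1) : ℝ)) := by
        have h0 : (0:ℝ) ≤ |x| ^ n / (2 ^ (n + 1) * (n.factorial : ℝ)) := by positivity
        exact mul_le_mul_of_nonneg_left hI h0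
    _ = |x| ^ n / (Nat.doubleFactorial (2 * n + 1) : ℝ) := by
        field_simp

lemma integral_abs_pow (k : ℕ) :
    (∫ s in (-1:ℝ)..1, |s| ^ k) = 2 / (k + 1) := by
  have h1 : (∫ s in (0:ℝ)..1, |s| ^ k) = 1 / (k + 1) := by
    rw [intervalIntegral.integral_congr (g := fun s => s ^ k)]
    · simp [integral_pow]
    · intro s hs
      rw [Set.uIcc_of_le (by norm_num)] at hs
      simp [_root_.abs_of_nonneg hs.1]
  have h2 : (∫ s in (-1:ℝ)..0, |s| ^ k) = 1 / (k + 1) := by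
    have hc : (∫ x in (0:ℝ)..1, |(-x)| ^ k) = ∫ x in (-(1:ℝ))..(-(0:ℝ)), |x| ^ k :=
      intervalIntegral.integral_comp_neg (fun s => |s| ^ k)
    simp only [abs_neg, neg_zero] at hc
    rw [← hc, h1]
  rw [← intervalIntegral.integral_add_adjacent_intervals (a := (-1:ℝ)) (b := 0) (c := 1),
    h1, h2]
  · ring
  · exact (Continuous.intervalIntegrable (by continuity) _ _)
  · exact (Continuous.intervalIntegrable (by continuity) _ _)

theorem Jmat_entry_decay (σ : ℝ) (hσ : 0 < σ) (m n : ℕ) :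
    |Jmat σ m n| ≤
      Real.sqrt ((2 * (m : ℝ) + 1) * (2 * (n : ℝ) + 1)) / (Real.pi * ((m : ℝ) + n + 1)) *
        (4 * σ ^ (m + n + 1) /
          ((Nat.doubleFactorial (2 * m + 1) : ℝ) * (Nat.doubleFactorial (2 * n + 1) : ℝ))) := by
  have hπ := Real.pi_pos
  have hdm := dfac_pos (2 * m + 1)
  have hdn := dfac_pos (2 * n + 1)
  set Km : ℝ := Real.sqrt (σ * (2 * (m:ℝ) + 1) / Real.pi) * σ ^ m / (Nat.doubleFactorial (2 * m + 1) : ℝ) with hKm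
  set Kn : ℝ := Real.sqrt (σ * (2 * (n:ℝ) + 1) / Real.pi) * σ ^ n / (Nat.doubleFactorial (2 * n + 1) : ℝ) with hKn
  have hKm0 : 0 ≤ Km := by positivity
  have hKn0 : 0 ≤ Kn := by positivity
  have hbound : |Jmat σ m n| ≤ Km * Kn * (2 / ((m:ℝ) + n + 1)) := by
    have hval : (∫ s in (-1:ℝ)..1, Km * Kn * |s| ^ (m + n)) = Km * Kn * (2 / ((m:ℝ) + n + 1)) := by
      rw [intervalIntegral.integral_const_mul, integral_abs_pow]
      push_cast
      ring
    have key : |Jmat σ m n| ≤ |∫ s in (-1:ℝ)..1, Km * Kn * |s| ^ (m + n)| := by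
      rw [← Real.norm_eq_abs, Jmat]
      apply intervalIntegral.norm_integral_le_abs_of_norm_le
      · filter_upwards [MeasureTheory.ae_restrict_mem measurableSet_uIoc] with t ht
        have ht' : t ∈ Set.Ioc (-1:ℝ) 1 := by
          rwa [Set.uIoc_of_le (by norm_num)] at ht
        have htabs : |t| ≤ 1 := abs_le.mpr ⟨ht'.1.le, ht'.2⟩
        have hbm : |jbar σ m t| ≤ Km * |t| ^ m := by
          rw [jbar, abs_mul, _root_.abs_of_nonneg (Real.sqrt_nonneg _)]
          calc Real.sqrt (σ * (2 * (m:ℝ) + 1) / Real.pi) * |sphBessel m (σ * t)|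
              ≤ Real.sqrt (σ * (2 * (m:ℝ) + 1) / Real.pi) *
                  (|σ * t| ^ m / (Nat.doubleFactorial (2 * m + 1) : ℝ)) := by
                gcongr; exact sphBessel_abs_le m (σ * t)
            _ = Km * |t| ^ m := by
                rw [hKm, abs_mul, abs_of_pos hσ, mul_pow]
                ring
        have hbn : |jbar σ n t| ≤ Kn * |t| ^ n := by
          rw [jbar, abs_mul, _root_.abs_of_nonneg (Real.sqrt_nonneg _)]
          calc Real.sqrt (σ * (2 * (n:ℝ) + 1) / Real.pi) * |sphBessel n (σ * t)|
              ≤ Real.sqrt (σ * (2 * (n:ℝ) + 1) / Real.pi) *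
                  (|σ * t| ^ n / (Nat.doubleFactorial (2 * n + 1) : ℝ)) := by
                gcongr; exact sphBessel_abs_le n (σ * t)
            _ = Kn * |t| ^ n := by
                rw [hKn, abs_mul, abs_of_pos hσ, mul_pow]
                ring
        rw [Real.norm_eq_abs, abs_mul]
        calc |jbar σ m t| * |jbar σ n t| ≤ (Km * |t| ^ m) * (Kn * |t| ^ n) := by
              exact mul_le_mul hbm hbn (abs_nonneg _) (by positivity)
          _ = Km * Kn * |t| ^ (m + n) := by rw [pow_add]; ring
      · exact ((Continuous.intervalIntegrable (by continuity) _ _).const_mul _)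
    calc |Jmat σ m n| ≤ |∫ s in (-1:ℝ)..1, Km * Kn * |s| ^ (m + n)| := key
      _ = Km * Kn * (2 / ((m:ℝ) + n + 1)) := by
          rw [hval, _root_.abs_of_nonneg (by positivity)]
  refine hbound.trans ?_
  have hsqrt : Real.sqrt (σ * (2 * (m:ℝ) + 1) / Real.pi) * Real.sqrt (σ * (2 * (n:ℝ) + 1) / Real.pi)
      = σ / Real.pi * Real.sqrt ((2 * (m:ℝ) + 1) * (2 * (n:ℝ) + 1)) := by
    rw [← Real.sqrt_mul (by positivity)]
    rw [show σ * (2 * (m:ℝ) + 1) / Real.pi * (σ * (2 * (n:ℝ) + 1) / Real.pi)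
        = (σ / Real.pi) ^ 2 * ((2 * (m:ℝ) + 1) * (2 * (n:ℝ) + 1)) by ring]
    rw [Real.sqrt_mul (by positivity), Real.sqrt_sq (by positivity)]
  have algKK : ∀ x y S s p a b dm dn c : ℝ, x * y = s / p * S →
      (x * a / dm) * (y * b / dn) * (2 / c) = S / (p * c) * (2 * (s * (a * b)) / (dm * dn)) := by
    intro x y S s p a b dm dn c h
    rw [show (x * a / dm) * (y * b / dn) * (2 / c) = (x * y) * (a * b) * 2 / (dm * (dn * c)) by
      ring, h]
    ring
  have hKK : Km * Kn * (2 / ((m:ℝ) + n + 1)) =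
      Real.sqrt ((2 * (m:ℝ) + 1) * (2 * (n:ℝ) + 1)) / (Real.pi * ((m:ℝ) + n + 1)) *
        (2 * σ ^ (m + n + 1) /
          ((Nat.doubleFactorial (2 * m + 1) : ℝ) * (Nat.doubleFactorial (2 * n + 1) : ℝ))) := by
    rw [hKm, hKn, algKK _ _ _ _ _ _ _ _ _ _ hsqrt,
      show σ * (σ ^ m * σ ^ n) = σ ^ (m + n + 1) by rw [pow_add, pow_add, pow_one]; ring]
  rw [hKK]
  have hA : (0:ℝ) ≤ Real.sqrt ((2 * (m:ℝ) + 1) * (2 * (n:ℝ) + 1)) / (Real.pi * ((m:ℝ) + n + 1)) := by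
    positivity
  gcongr
  norm_num
end

section
/- Let σ > 0, λ ∈ ℂ, and let φ ∈ L²((−1,1); ℂ) satisfy λ φ(t) = ∫_{-1}^{1} S_σ(t−s) φ(s) ds for almost every t ∈ (−1,1). Define Φ(t) = ∫_{-1}^{1} e^{i σ s t} φ(s) ds. Then λ Φ(t) = ∫_{-1}^{1} S_σ(t−s) Φ(s) ds for every t ∈ (−1,1); that is, the finite Fourier transform of an eigenfunction of the truncated sinc-kernel operator is again an eigenfunction with the same eigenvalue. -/
open MeasureTheory Real Complex

/-- The sinc kernel S_σ(u) = sin(σu)/(πu), with the removable-singularity value σ/π at u = 0. -/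
noncomputable def sincK (σ : ℝ) (u : ℝ) : ℝ :=
  if u = 0 then σ / Real.pi else Real.sin (σ * u) / (Real.pi * u)

lemma sincK_measurable (σ : ℝ) : Measurable (sincK σ) := by
  unfold sincK
  exact Measurable.ite (measurableSet_eq) measurable_const
    ((Real.measurable_sin.comp (measurable_const.mul measurable_id)).div
      (measurable_const.mul measurable_id))

lemma sincK_symm (σ u v : ℝ) : sincK σ (u - v) = sincK σ (v - u) := by
  unfold sincK
  rcases eq_or_ne u v with h | h
  · subst h; simp
  · rw [if_neg (sub_ne_zero.2 h), if_neg (sub_ne_zero.2 h.symm),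
      show u - v = -(v - u) by ring, mul_neg, Real.sin_neg, mul_neg, neg_div_neg_eq]

lemma sincK_bound (σ : ℝ) (hσ : 0 < σ) (w : ℝ) : |sincK σ w| ≤ σ / Real.pi := by
  unfold sincK
  split
  · rw [_root_.abs_of_nonneg (by positivity)]
  · rename_i h
    rw [abs_div, abs_mul, _root_.abs_of_nonneg Real.pi_pos.le]
    have hw : 0 < |w| := abs_pos.2 h
    rw [div_le_div_iff₀ (by positivity) Real.pi_pos]
    calc |Real.sin (σ * w)| * Real.pi ≤ |σ * w| * Real.pi :=
            mul_le_mul_of_nonneg_right Real.abs_sin_le_abs Real.pi_pos.le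
      _ = σ * (Real.pi * |w|) := by rw [abs_mul, _root_.abs_of_pos hσ]; ring

lemma finiteIoc : IsFiniteMeasure (volume.restrict (Set.Ioc (-1:ℝ) 1)) := by
  constructor
  rw [Measure.restrict_apply_univ]
  exact measure_Ioc_lt_top

lemma swap_lemma (g : ℝ → ℝ → ℂ)
    (hg : AEStronglyMeasurable (fun p : ℝ × ℝ => g p.1 p.2)
      ((volume.restrict (Set.Ioc (-1:ℝ) 1)).prod (volume.restrict (Set.Ioc (-1:ℝ) 1))))
    (C : ℝ) (hC : ∀ s u, ‖g s u‖ ≤ C)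
    (φ : ℝ → ℂ) (hφ : Integrable φ (volume.restrict (Set.Ioc (-1:ℝ) 1))) :
    ∫ s in (-1:ℝ)..1, ∫ u in (-1:ℝ)..1, g s u * φ u
      = ∫ u in (-1:ℝ)..1, ∫ s in (-1:ℝ)..1, g s u * φ u := by
  haveI := finiteIoc
  rw [intervalIntegral.integral_of_le (by norm_num : (-1:ℝ) ≤ 1),
    intervalIntegral.integral_of_le (by norm_num : (-1:ℝ) ≤ 1)]
  simp_rw [intervalIntegral.integral_of_le (by norm_num : (-1:ℝ) ≤ 1)]
  apply MeasureTheory.integral_integral_swap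
  have hφ2 : Integrable (fun p : ℝ × ℝ => φ p.2)
      ((volume.restrict (Set.Ioc (-1:ℝ) 1)).prod (volume.restrict (Set.Ioc (-1:ℝ) 1))) := by
    rw [integrable_prod_iff hφ.1.comp_snd]
    refine ⟨Filter.Eventually.of_forall fun x => hφ, ?_⟩
    simpa using integrable_const (∫ y, ‖φ y‖ ∂(volume.restrict (Set.Ioc (-1:ℝ) 1)))
  exact hφ2.bdd_mul hg (Filter.Eventually.of_forall fun p => hC p.1 p.2)

lemma norm_exp_I (r : ℝ) : ‖Complex.exp ((r : ℂ) * Complex.I)‖ = 1 := by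
  rw [Complex.norm_exp_ofReal_mul_I]

lemma sincK_repr (σ : ℝ) (hσ : 0 < σ) (w : ℝ) :
    (sincK σ w : ℂ) = ((σ / (2 * Real.pi) : ℝ) : ℂ)
      * ∫ v in (-1:ℝ)..1, Complex.exp (Complex.I * σ * v * w) := by
  rcases eq_or_ne w 0 with h | h
  · subst h
    simp only [sincK, if_pos rfl]
    have : ∀ v : ℝ, Complex.I * σ * v * (0:ℝ) = 0 := by intro v; push_cast; ring
    simp_rw [this, Complex.exp_zero]
    rw [intervalIntegral.integral_const]
    push_cast
    have hπ : (Real.pi : ℂ) ≠ 0 := Complex.ofReal_ne_zero.2 Real.pi_ne_zero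
    field_simp
    norm_num
  · have hc : (Complex.I * σ * w) ≠ 0 := by
      apply mul_ne_zero (mul_ne_zero Complex.I_ne_zero _)
      · exact Complex.ofReal_ne_zero.2 h
      · exact Complex.ofReal_ne_zero.2 hσ.ne'
    have hrw : ∀ v : ℝ, Complex.I * σ * v * w = (Complex.I * σ * w) * v := by
      intro v; ring
    simp_rw [hrw]
    rw [integral_exp_mul_complex hc]
    simp only [sincK, if_neg h]
    have e1 : Complex.I * σ * w * ((1:ℝ):ℂ) = (((σ * w : ℝ)) : ℂ) * Complex.I := by push_cast; ring
    have e2 : Complex.I * σ * w * (-1 : ℝ) = -((((σ * w : ℝ)) : ℂ) * Complex.I) := by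
      push_cast; ring
    rw [e1, e2]
    have hsin : Complex.exp ((((σ * w : ℝ)) : ℂ) * Complex.I)
        - Complex.exp (-((((σ * w : ℝ)) : ℂ) * Complex.I))
        = 2 * Complex.I * Complex.sin ((σ * w : ℝ) : ℂ) := by
      rw [Complex.sin]
      ring_nf
      rw [Complex.I_sq]
      ring
    rw [hsin, ← Complex.ofReal_sin]
    have hπ : (Real.pi : ℂ) ≠ 0 := Complex.ofReal_ne_zero.2 Real.pi_ne_zero
    have hwC : (w : ℂ) ≠ 0 := Complex.ofReal_ne_zero.2 h
    have hσC : (σ : ℂ) ≠ 0 := Complex.ofReal_ne_zero.2 hσ.ne'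
    push_cast
    field_simp

lemma kernel_symm (σ : ℝ) (hσ : 0 < σ) (t u : ℝ) :
    ∫ s in (-1:ℝ)..1, (sincK σ (t - s) : ℂ) * Complex.exp (Complex.I * σ * u * s)
      = ∫ v in (-1:ℝ)..1, Complex.exp (Complex.I * σ * v * t) * (sincK σ (u - v) : ℂ) := by
  have hL : ∀ s : ℝ, (sincK σ (t - s) : ℂ) * Complex.exp (Complex.I * σ * u * s)
      = ((σ / (2 * Real.pi) : ℝ) : ℂ)
        * ∫ v in (-1:ℝ)..1,
            Complex.exp (Complex.I * σ * v * t + Complex.I * σ * (u - v) * s) := by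
    intro s
    rw [sincK_repr σ hσ (t - s), mul_assoc, ← intervalIntegral.integral_mul_const]
    congr 1
    apply intervalIntegral.integral_congr
    intro v _
    simp only [← Complex.exp_add]
    congr 1
    push_cast
    ring
  have hR : ∀ v : ℝ, Complex.exp (Complex.I * σ * v * t) * (sincK σ (u - v) : ℂ)
      = ((σ / (2 * Real.pi) : ℝ) : ℂ)
        * ∫ s in (-1:ℝ)..1,
            Complex.exp (Complex.I * σ * v * t + Complex.I * σ * (u - v) * s) := by
    intro v
    rw [sincK_repr σ hσ (u - v), mul_left_comm, ← intervalIntegral.integral_const_mul]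
    congr 1
    apply intervalIntegral.integral_congr
    intro s _
    simp only [← Complex.exp_add]
    congr 1
    push_cast
    ring
  simp_rw [hL, hR]
  rw [intervalIntegral.integral_const_mul, intervalIntegral.integral_const_mul]
  congr 1
  have := swap_lemma
    (fun s v => Complex.exp (Complex.I * σ * v * t + Complex.I * σ * (u - v) * s))
    (by
      apply Continuous.aestronglyMeasurable
      fun_prop)
    1
    (by
      intro s v
      have : Complex.I * (σ:ℂ) * v * t + Complex.I * σ * ((u:ℂ) - v) * s
          = ((σ * v * t + σ * (u - v) * s : ℝ) : ℂ) * Complex.I := by push_cast; ring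
      beta_reduce
      rw [this, norm_exp_I])
    (fun _ => 1)
    (integrable_const 1)
  simpa using this

theorem finite_fourier_of_eigenfunction (σ : ℝ) (hσ : 0 < σ) (lam : ℂ) (φ : ℝ → ℂ)
    (hφ : MemLp φ 2 (volume.restrict (Set.Ioo (-1:ℝ) 1)))
    (heig : ∀ᵐ t ∂(volume.restrict (Set.Ioo (-1:ℝ) 1)),
      lam * φ t = ∫ s in (-1:ℝ)..1, (sincK σ (t - s) : ℂ) * φ s) :
    ∀ t ∈ Set.Ioo (-1:ℝ) 1,
      lam * (∫ s in (-1:ℝ)..1, Complex.exp (Complex.I * σ * s * t) * φ s)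
        = ∫ s in (-1:ℝ)..1, (sincK σ (t - s) : ℂ) *
            (∫ u in (-1:ℝ)..1, Complex.exp (Complex.I * σ * u * s) * φ u) := by
  intro t ht
  haveI := finiteIoc
  have hres : volume.restrict (Set.Ioo (-1:ℝ) 1) = volume.restrict (Set.Ioc (-1:ℝ) 1) :=
    Measure.restrict_congr_set MeasureTheory.Ioo_ae_eq_Ioc
  haveI : IsFiniteMeasure (volume.restrict (Set.Ioo (-1:ℝ) 1)) := by
    rw [hres]; exact finiteIoc
  have hφint : Integrable φ (volume.restrict (Set.Ioc (-1:ℝ) 1)) := by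
    rw [← hres]; exact hφ.integrable (by norm_num)
  have hbd : ∀ (a b c : ℝ), ‖Complex.exp (Complex.I * a * b * c)‖ = 1 := by
    intro a b c
    have : Complex.I * a * b * c = ((a * b * c : ℝ) : ℂ) * Complex.I := by push_cast; ring
    rw [this, norm_exp_I]
  symm
  calc
    ∫ s in (-1:ℝ)..1, (sincK σ (t - s) : ℂ) *
        (∫ u in (-1:ℝ)..1, Complex.exp (Complex.I * σ * u * s) * φ u)
      = ∫ s in (-1:ℝ)..1, ∫ u in (-1:ℝ)..1,
          ((sincK σ (t - s) : ℂ) * Complex.exp (Complex.I * σ * u * s)) * φ u := by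
        apply intervalIntegral.integral_congr
        intro s _
        beta_reduce
        rw [← intervalIntegral.integral_const_mul]
        simp_rw [mul_assoc]
    _ = ∫ u in (-1:ℝ)..1, ∫ s in (-1:ℝ)..1,
          ((sincK σ (t - s) : ℂ) * Complex.exp (Complex.I * σ * u * s)) * φ u := by
        apply swap_lemma _ _ (σ / Real.pi) _ φ hφint
        · apply AEStronglyMeasurable.mul
          · exact (Complex.measurable_ofReal.comp
              ((sincK_measurable σ).comp (measurable_const.sub measurable_fst))).aestronglyMeasurable
          · exact Continuous.aestronglyMeasurable (by fun_prop)
        · intro s u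
          rw [norm_mul, hbd]
          have h1 : ‖((sincK σ (t - s)) : ℂ)‖ ≤ σ / Real.pi := by
            rw [Complex.norm_real, Real.norm_eq_abs]
            exact sincK_bound σ hσ _
          simpa using h1
    _ = ∫ u in (-1:ℝ)..1,
          (∫ s in (-1:ℝ)..1, (sincK σ (t - s) : ℂ) * Complex.exp (Complex.I * σ * u * s)) * φ u := by
        apply intervalIntegral.integral_congr
        intro u _
        beta_reduce
        rw [intervalIntegral.integral_mul_const]
    _ = ∫ u in (-1:ℝ)..1,
          (∫ v in (-1:ℝ)..1, Complex.exp (Complex.I * σ * v * t) * (sincK σ (u - v) : ℂ)) * φ u := by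
        apply intervalIntegral.integral_congr
        intro u _
        beta_reduce
        rw [kernel_symm σ hσ t u]
    _ = ∫ u in (-1:ℝ)..1, ∫ v in (-1:ℝ)..1,
          (Complex.exp (Complex.I * σ * v * t) * (sincK σ (u - v) : ℂ)) * φ u := by
        apply intervalIntegral.integral_congr
        intro u _
        beta_reduce
        rw [← intervalIntegral.integral_mul_const]
    _ = ∫ v in (-1:ℝ)..1, ∫ u in (-1:ℝ)..1,
          (Complex.exp (Complex.I * σ * v * t) * (sincK σ (u - v) : ℂ)) * φ u := by
        symm
        apply swap_lemma _ _ (σ / Real.pi) _ φ hφint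
        · apply AEStronglyMeasurable.mul
          · exact Continuous.aestronglyMeasurable (by fun_prop)
          · exact (Complex.measurable_ofReal.comp
              ((sincK_measurable σ).comp (measurable_snd.sub measurable_fst))).aestronglyMeasurable
        · intro v u
          rw [norm_mul, hbd]
          have h1 : ‖((sincK σ (u - v)) : ℂ)‖ ≤ σ / Real.pi := by
            rw [Complex.norm_real, Real.norm_eq_abs]
            exact sincK_bound σ hσ _
          simpa using h1
    _ = ∫ v in (-1:ℝ)..1, Complex.exp (Complex.I * σ * v * t) *
          (∫ u in (-1:ℝ)..1, (sincK σ (v - u) : ℂ) * φ u) := by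
        apply intervalIntegral.integral_congr
        intro v _
        beta_reduce
        simp_rw [mul_assoc]
        rw [intervalIntegral.integral_const_mul]
        congr 1
        apply intervalIntegral.integral_congr
        intro u' _
        beta_reduce
        rw [sincK_symm]
    _ = ∫ v in (-1:ℝ)..1, Complex.exp (Complex.I * σ * v * t) * (lam * φ v) := by
        rw [intervalIntegral.integral_of_le (by norm_num : (-1:ℝ) ≤ 1),
          intervalIntegral.integral_of_le (by norm_num : (-1:ℝ) ≤ 1), ← hres]
        apply integral_congr_ae
        filter_upwards [heig] with v hv
        rw [← hv]
    _ = lam * ∫ v in (-1:ℝ)..1, Complex.exp (Complex.I * σ * v * t) * φ v := by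
        rw [← intervalIntegral.integral_const_mul]
        apply intervalIntegral.integral_congr
        intro v _
        beta_reduce
        ring
end

section
/- Let σ > 0, ν ∈ ℂ, and let φ ∈ L²((−1,1); ℝ) be real-valued and satisfy ∫_{-1}^{1} e^{i σ s t} φ(s) ds = ν φ(t) for almost every t ∈ (−1,1). Then ∫_{-1}^{1} S_σ(t−s) φ(s) ds = (σ |ν|² / (2π)) φ(t) for almost every t ∈ (−1,1). -/
/-!
Write `F_σ f (t) = ∫_{-1}^{1} e^{iσst} f(s) ds` for the finite Fourier transform. Integrating
out the frequency variable with Fubini, `∫_{-1}^{1} e^{iσua} du = (2π/σ) S_σ(a)` turns the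
composite `F_{-σ} F_σ` into `(2π/σ)` times convolution with the sinc kernel on `(-1, 1)`.
For real `φ`, conjugating `F_σ φ = ν φ` gives `F_{-σ} φ = ν̄ φ`, so `F_{-σ} F_σ φ = |ν|² φ`.
-/

open MeasureTheory Real Complex

open Set ComplexConjugate

lemma sincK_neg (σ u : ℝ) : sincK σ (-u) = sincK σ u := by
  rcases eq_or_ne u 0 with rfl | hu
  · simp
  · simp only [sincK, neg_eq_zero, hu, if_false, mul_neg, Real.sin_neg, neg_div_neg_eq]

lemma intervalIntegral_eq_integral_Ioo {E : Type*} [NormedAddCommGroup E] [NormedSpace ℝ E]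
    {a b : ℝ} (hab : a ≤ b) (f : ℝ → E) :
    ∫ x in a..b, f x = ∫ x in Ioo a b, f x := by
  rw [intervalIntegral.integral_of_le hab, integral_Ioc_eq_integral_Ioo]

lemma integral_cexp_mul_I_eq_sincK {σ : ℝ} (hσ : σ ≠ 0) (a : ℝ) :
    ∫ u in (-1:ℝ)..1, cexp (I * σ * u * a) = ((2 * π / σ * sincK σ a : ℝ) : ℂ) := by
  have hπ : (π : ℂ) ≠ 0 := ofReal_ne_zero.mpr pi_ne_zero
  have hσ' : (σ : ℂ) ≠ 0 := ofReal_ne_zero.mpr hσ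
  rcases eq_or_ne a 0 with rfl | ha
  · simp only [ofReal_zero, mul_zero, Complex.exp_zero, intervalIntegral.integral_const,
      sincK, if_true]
    field_simp
    norm_num
  · have hc : ((σ * a : ℝ) : ℂ) * I ≠ 0 := by simp [hσ, ha]
    simp_rw [show ∀ u : ℝ, I * σ * u * a = ((σ * a : ℝ) : ℂ) * I * u from fun u => by
      push_cast; ring]
    rw [integral_exp_mul_complex hc, ofReal_one, ofReal_neg, ofReal_one, mul_one, mul_neg_one,
      ← two_sinh, sinh_mul_I, ← ofReal_sin]
    simp only [sincK, ha, if_false]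
    have ha' : (a : ℂ) ≠ 0 := ofReal_ne_zero.mpr ha
    push_cast
    field_simp

noncomputable def finiteFourier (σ : ℝ) (f : ℝ → ℂ) (t : ℝ) : ℂ :=
  ∫ s in Ioo (-1:ℝ) 1, cexp (I * σ * s * t) * f s

lemma finiteFourier_congr_ae {σ : ℝ} {f g : ℝ → ℂ}
    (h : f =ᵐ[volume.restrict (Ioo (-1:ℝ) 1)] g) : finiteFourier σ f = finiteFourier σ g :=
  funext fun t => integral_congr_ae <| by filter_upwards [h] with s hs; rw [hs]

lemma finiteFourier_const_mul (σ : ℝ) (c : ℂ) (f : ℝ → ℂ) (t : ℝ) :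
    finiteFourier σ (fun s => c * f s) t = c * finiteFourier σ f t := by
  simp only [finiteFourier, mul_left_comm _ c, integral_const_mul]

lemma conj_finiteFourier (σ : ℝ) (f : ℝ → ℂ) (t : ℝ) :
    conj (finiteFourier σ f t) = finiteFourier (-σ) (fun s => conj (f s)) t := by
  simp only [finiteFourier, ← integral_conj, map_mul, ← exp_conj, conj_I, conj_ofReal,
    ofReal_neg, neg_mul, mul_neg]

lemma integrable_cexp_mul_prod {σ t : ℝ} {f : ℝ → ℂ}
    (hf : IntegrableOn f (Ioo (-1:ℝ) 1)) :
    Integrable (fun z : ℝ × ℝ => cexp (I * σ * z.1 * (z.2 - t)) * f z.2)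
      ((volume.restrict (Ioo (-1:ℝ) 1)).prod (volume.restrict (Ioo (-1:ℝ) 1))) := by
  have hexp : Continuous fun z : ℝ × ℝ => cexp (I * σ * z.1 * (z.2 - t)) := by fun_prop
  refine ((integrable_const (1:ℝ)).mul_prod hf.norm).mono'
    (hexp.aestronglyMeasurable.mul hf.1.comp_snd) (.of_forall fun z => ?_)
  rw [norm_mul, show I * σ * z.1 * (z.2 - t) = ((σ * z.1 * (z.2 - t) : ℝ) : ℂ) * I by
    push_cast; ring, norm_exp_ofReal_mul_I, one_mul]

theorem finiteFourier_neg_finiteFourier {σ : ℝ} (hσ : σ ≠ 0) {f : ℝ → ℂ}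
    (hf : IntegrableOn f (Ioo (-1:ℝ) 1)) (t : ℝ) :
    finiteFourier (-σ) (finiteFourier σ f) t =
      ((2 * π / σ : ℝ) : ℂ) * ∫ s in Ioo (-1:ℝ) 1, (sincK σ (t - s) : ℂ) * f s := by
  calc finiteFourier (-σ) (finiteFourier σ f) t
      = ∫ u in Ioo (-1:ℝ) 1, ∫ s in Ioo (-1:ℝ) 1, cexp (I * σ * u * (s - t)) * f s := by
        refine integral_congr_ae (.of_forall fun u => ?_)
        simp only [finiteFourier, ← integral_const_mul]
        refine integral_congr_ae (.of_forall fun s => ?_)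
        dsimp only
        rw [← mul_assoc, ← Complex.exp_add]
        congr 2
        push_cast
        ring
    _ = ∫ s in Ioo (-1:ℝ) 1, (∫ u in Ioo (-1:ℝ) 1, cexp (I * σ * u * (s - t))) * f s := by
        simp only [integral_integral_swap (f := fun u s : ℝ => cexp (I * σ * u * (s - t)) * f s)
          (integrable_cexp_mul_prod hf), integral_mul_const]
    _ = _ := by
        rw [← integral_const_mul]
        refine integral_congr_ae (.of_forall fun s => ?_)
        dsimp only
        rw [← intervalIntegral_eq_integral_Ioo (by norm_num), ← ofReal_sub,
          integral_cexp_mul_I_eq_sincK hσ, ← sincK_neg, neg_sub]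
        push_cast
        ring

theorem sinc_eigen_of_fourier_eigen (σ : ℝ) (hσ : 0 < σ) (ν : ℂ) (φ : ℝ → ℝ)
    (hφ : MemLp φ 2 (volume.restrict (Set.Ioo (-1:ℝ) 1)))
    (heig : ∀ᵐ (t : ℝ) ∂(volume.restrict (Set.Ioo (-1:ℝ) 1)),
      (∫ s in (-1:ℝ)..1, Complex.exp (Complex.I * σ * s * (t : ℂ)) * (φ s : ℂ)) = ν * (φ t : ℂ)) :
    ∀ᵐ (t : ℝ) ∂(volume.restrict (Set.Ioo (-1:ℝ) 1)),
      (∫ s in (-1:ℝ)..1, sincK σ (t - s) * φ s)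
        = σ * ‖ν‖ ^ 2 / (2 * Real.pi) * φ t := by
  have hFφ : finiteFourier σ (fun s => φ s) =ᵐ[volume.restrict (Ioo (-1:ℝ) 1)]
      fun t => ν * φ t := by
    filter_upwards [heig] with t ht
    rwa [finiteFourier, ← intervalIntegral_eq_integral_Ioo (by norm_num)]
  filter_upwards [hFφ] with t ht
  have hadj : finiteFourier (-σ) (fun s => φ s) t = conj ν * φ t := by
    simpa only [conj_finiteFourier, conj_ofReal, map_mul] using congrArg conj ht
  have hcomp := finiteFourier_neg_finiteFourier hσ.ne' (f := fun s => (φ s : ℂ))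
    (hφ.integrable one_le_two).ofReal t
  rw [finiteFourier_congr_ae hFφ, finiteFourier_const_mul, hadj, ← mul_assoc, mul_conj,
    ← Complex.sq_norm] at hcomp
  have hreal : ‖ν‖ ^ 2 * φ t = 2 * π / σ * ∫ s in Ioo (-1:ℝ) 1, sincK σ (t - s) * φ s := by
    exact_mod_cast hcomp
  rw [intervalIntegral_eq_integral_Ioo (by norm_num)]
  field_simp
  rw [mul_assoc σ, hreal]
  field_simp
end

section
/- For every σ > 0 and all real t, s, the series ∑_{n∈ℤ} ψ_n(t) ψ_n(s) converges and its sum equals sin(σ(t−s))/(π(t−s)) when t ≠ s and equals σ/π when t = s. -/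
open MeasureTheory Real Complex

noncomputable def sincR (x : ℝ) : ℝ := if x = 0 then 1 else Real.sin x / x

lemma sincR_neg (x : ℝ) : sincR (-x) = sincR x := by
  unfold sincR
  rcases eq_or_ne x 0 with h | h
  · simp [h]
  · rw [if_neg (neg_ne_zero.2 h), if_neg h, Real.sin_neg, neg_div_neg_eq]

lemma integral_expI (σ u : ℝ) (hσ : 0 < σ) :
    ∫ x in (-σ)..σ, Complex.exp (Complex.I * u * x) =
      (((2 * σ) * sincR (σ * u) : ℝ) : ℂ) := by
  rcases eq_or_ne u 0 with hu | hu
  · simp [hu, sincR, two_mul]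
  · have hc : (Complex.I * u : ℂ) ≠ 0 := by
      simp [Complex.ext_iff, hu]
    rw [integral_exp_mul_complex hc]
    have h1 : Complex.I * ↑u * ↑σ = ↑(u * σ) * Complex.I := by push_cast; ring
    have h2 : Complex.I * ↑u * ↑(-σ) = -(↑(u * σ)) * Complex.I := by push_cast; ring
    rw [h1, h2]
    rw [show Complex.exp (↑(u*σ) * Complex.I) - Complex.exp (-(↑(u*σ)) * Complex.I)
        = 2 * Complex.I * Complex.sin (↑(u*σ)) by
      rw [Complex.sin]; ring_nf; rw [Complex.exp_neg]; field_simp; rw [Complex.I_sq]; ring]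
    rw [← Complex.ofReal_sin, sincR, if_neg (mul_ne_zero hσ.ne' hu)]
    have : Real.sin (u * σ) = Real.sin (σ * u) := by ring_nf
    rw [this]
    rw [div_eq_iff hc]
    push_cast
    have hσ' : (σ:ℂ) ≠ 0 := Complex.ofReal_ne_zero.2 hσ.ne'
    have hu' : (u:ℂ) ≠ 0 := Complex.ofReal_ne_zero.2 hu
    field_simp

lemma fourierCoeff_expI (σ : ℝ) (hσ : 0 < σ) [Fact (0 < 2*σ)] (u : ℝ) (n : ℤ) :
    fourierCoeff (AddCircle.liftIoc (2*σ) (-σ) (fun x => Complex.exp (Complex.I * u * x))) n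
      = ((sincR (σ * u - n * Real.pi) : ℝ) : ℂ) := by
  rw [fourierCoeff_liftIoc_eq, fourierCoeffOn_eq_integral]
  simp_rw [fourier_coe_apply, smul_eq_mul, ← Complex.exp_add]
  have hb : -σ + 2*σ = σ := by ring
  rw [hb]
  have hσ' : (σ:ℂ) ≠ 0 := Complex.ofReal_ne_zero.2 hσ.ne'
  have hexp : ∀ x : ℝ, 2*(π:ℂ)*Complex.I*((-n : ℤ):ℂ)*(x:ℂ)/((σ - -σ : ℝ):ℂ) + Complex.I*(u:ℂ)*(x:ℂ)
      = Complex.I * ((u - n*π/σ : ℝ):ℂ) * (x:ℂ) := by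
    intro x
    push_cast
    rw [show (σ:ℂ) - -σ = 2*σ by ring]
    field_simp
    ring
  simp_rw [hexp]
  rw [integral_expI σ (u - n*π/σ) hσ]
  rw [show σ * (u - n*π/σ) = σ*u - n*π by field_simp]
  rw [show σ - -σ = 2*σ by ring]
  rw [real_smul]
  rw [← Complex.ofReal_mul]
  congr 1
  field_simp
lemma key (σ : ℝ) (hσ : 0 < σ) (t s : ℝ) :
    HasSum (fun n : ℤ => sincR (σ*t - n*Real.pi) * sincR (σ*s - n*Real.pi))
      (sincR (σ*(t-s))) := by
  haveI : Fact (0 < 2*σ) := ⟨by linarith⟩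
  set E : ℝ → AddCircle (2*σ) → ℂ :=
    fun u => AddCircle.liftIoc (2*σ) (-σ) (fun x => Complex.exp (Complex.I*u*x)) with hE
  have hmeas : ∀ u, Measurable (E u) := by
    intro u
    exact ((Complex.measurable_exp.comp (measurable_const.mul Complex.measurable_ofReal)).comp
      measurable_subtype_coe).comp (AddCircle.measurableEquivIoc (2*σ) (-σ)).measurable
  have hbd : ∀ u (q : AddCircle (2*σ)), ‖E u q‖ = 1 := by
    intro u q
    rw [hE]
    unfold AddCircle.liftIoc
    simp [Function.comp, Complex.norm_exp]
  have hmem : ∀ u, MemLp (E u) 2 AddCircle.haarAddCircle :=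
    fun u => MemLp.of_bound (hmeas u).aestronglyMeasurable 1
      (Filter.Eventually.of_forall fun q => (hbd u q).le)
  set ft := (hmem t).toLp (E t) with hft
  set fs := (hmem s).toLp (E s) with hfs
  have hcoeff : ∀ (u : ℝ) (g : Lp ℂ 2 (@AddCircle.haarAddCircle (2*σ) _)),
      (⇑g =ᵐ[AddCircle.haarAddCircle] E u) → ∀ i,
      fourierBasis.repr g i = ((sincR (σ*u - i*Real.pi) : ℝ) : ℂ) := by
    intro u g hg i
    rw [fourierBasis_repr]
    have : fourierCoeff (⇑g) i = fourierCoeff (E u) i := by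
      apply integral_congr_ae
      filter_upwards [hg] with x hx
      rw [hx]
    rw [this, hE]
    exact fourierCoeff_expI σ hσ u i
  have hrt := hcoeff t ft (MemLp.coeFn_toLp _) 
  have hrs := hcoeff s fs (MemLp.coeFn_toLp _)
  have P := fourierBasis.hasSum_inner_mul_inner ft fs
  have hinner1 : ∀ i : ℤ, (inner ℂ ft (fourierBasis i) : ℂ) * inner ℂ (fourierBasis i) fs
      = (((sincR (σ*t - i*Real.pi) * sincR (σ*s - i*Real.pi) : ℝ)) : ℂ) := by
    intro i
    rw [← fourierBasis.repr_apply_apply fs i, ← inner_conj_symm ft (fourierBasis i),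
      ← fourierBasis.repr_apply_apply ft i, hrt i, hrs i, Complex.conj_ofReal,
      ← Complex.ofReal_mul]
  have hinner2 : (inner ℂ ft fs : ℂ) = ((sincR (σ*(t-s)) : ℝ) : ℂ) := by
    rw [MeasureTheory.L2.inner_def]
    have : ∫ q, (inner ℂ (ft q) (fs q) : ℂ) ∂AddCircle.haarAddCircle
        = ∫ q, E (s - t) q ∂AddCircle.haarAddCircle := by
      apply integral_congr_ae
      filter_upwards [MemLp.coeFn_toLp (hmem t), MemLp.coeFn_toLp (hmem s)] with q h1 h2
      rw [h1, h2, RCLike.inner_apply, hE]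
      show Complex.exp _ * (starRingEnd ℂ) (Complex.exp _) = Complex.exp _
      rw [← Complex.exp_conj, ← Complex.exp_add]
      congr 1
      simp [Complex.conj_ofReal]
      ring
    rw [this]
    have h0 : (∫ q, E (s - t) q ∂AddCircle.haarAddCircle) = fourierCoeff (E (s-t)) 0 := by
      simp [fourierCoeff]
    rw [h0, hE]
    rw [fourierCoeff_expI σ hσ (s - t) 0]
    push_cast
    rw [show σ*(s-t) - 0*Real.pi = -(σ*(t-s)) by ring, sincR_neg]
  simp_rw [hinner1] at P
  rw [hinner2] at P
  have := Complex.reCLM.hasSum P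
  simpa using this

/-- Normalized translates of the sinc function. -/
noncomputable def psiT (σ : ℝ) (n : ℤ) (t : ℝ) : ℝ :=
  if σ * t - n * Real.pi = 0 then Real.sqrt (σ / Real.pi)
  else Real.sqrt (σ / Real.pi) * Real.sin (σ * t - n * Real.pi) / (σ * t - n * Real.pi)

theorem sinc_kernel_sampling_expansion (σ : ℝ) (hσ : 0 < σ) (t s : ℝ) :
    HasSum (fun n : ℤ => psiT σ n t * psiT σ n s)
      (if t = s then σ / Real.pi else Real.sin (σ * (t - s)) / (Real.pi * (t - s))) := by
  have hπ : 0 < Real.pi := Real.pi_pos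
  have hpsi : ∀ (n : ℤ) (x : ℝ), psiT σ n x = Real.sqrt (σ/Real.pi) * sincR (σ*x - n*Real.pi) := by
    intro n x
    unfold psiT sincR
    split_ifs with h
    · rw [mul_one]
    · rw [mul_div_assoc]
  have hsq : Real.sqrt (σ/Real.pi) * Real.sqrt (σ/Real.pi) = σ/Real.pi :=
    Real.mul_self_sqrt (div_nonneg hσ.le hπ.le)
  have H := (key σ hσ t s).mul_left (σ/Real.pi)
  have heq : (fun n : ℤ => σ/Real.pi * (sincR (σ*t - n*Real.pi) * sincR (σ*s - n*Real.pi)))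
      = fun n : ℤ => psiT σ n t * psiT σ n s := by
    funext n; rw [hpsi, hpsi, mul_mul_mul_comm, hsq]
  rw [heq] at H
  rcases eq_or_ne t s with h | h
  · subst h
    simpa [sincR] using H
  · rw [if_neg h]
    have hts : t - s ≠ 0 := sub_ne_zero.2 h
    have hu : σ*(t-s) ≠ 0 := mul_ne_zero hσ.ne' hts
    have : σ/Real.pi * sincR (σ*(t-s)) = Real.sin (σ*(t-s))/(Real.pi*(t-s)) := by
      rw [sincR, if_neg hu]
      field_simp
    rwa [this] at H
end

section
/- Let σ > 0 and let m ∈ ℤ satisfy |m|π > σ. Then ∫_{-1}^{1} ψ_m(t)² dt ≤ 2σ / (π(m²π² − σ²)); consequently, for all m, n ∈ ℤ with |m|π > σ and |n|π > σ, the entry A_{mn} = ∫_{-1}^{1} ψ_m(t) ψ_n(t) dt satisfies A_{mn}² ≤ (2σ / (π(m²π² − σ²))) · (2σ / (π(n²π² − σ²))). -/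
open MeasureTheory Real Complex

/-- Cauchy–Schwarz for interval integrals, via the discriminant trick. -/
lemma cs_interval {f g : ℝ → ℝ} {a b : ℝ} (hab : a ≤ b)
    (hf2 : IntervalIntegrable (fun t => f t ^ 2) volume a b)
    (hg2 : IntervalIntegrable (fun t => g t ^ 2) volume a b)
    (hfg : IntervalIntegrable (fun t => f t * g t) volume a b) :
    (∫ t in a..b, f t * g t) ^ 2 ≤ (∫ t in a..b, f t ^ 2) * (∫ t in a..b, g t ^ 2) := by
  set A := ∫ t in a..b, g t ^ 2 with hA
  set B := ∫ t in a..b, f t * g t with hB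
  set C := ∫ t in a..b, f t ^ 2 with hC
  have key : ∀ x : ℝ, 0 ≤ A * (x * x) + (2 * B) * x + C := by
    intro x
    have h1 : (∫ t in a..b, (f t + x * g t) ^ 2) = A * (x * x) + (2 * B) * x + C := by
      have : (fun t => (f t + x * g t) ^ 2)
          = fun t => f t ^ 2 + (2 * x) * (f t * g t) + (x * x) * (g t ^ 2) := by
        funext t; ring
      rw [this]
      rw [intervalIntegral.integral_add (hf2.add (hfg.const_mul _)) (hg2.const_mul _),
        intervalIntegral.integral_add hf2 (hfg.const_mul _),
        intervalIntegral.integral_const_mul, intervalIntegral.integral_const_mul]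
      ring
    rw [← h1]
    exact intervalIntegral.integral_nonneg hab fun t _ => sq_nonneg _
  have hd := discrim_le_zero key
  rw [discrim] at hd
  nlinarith [hd]

lemma ne_on (σ : ℝ) (hσ : 0 < σ) (m : ℤ) (hm : σ < |(m : ℝ)| * Real.pi) :
    ∀ t ∈ Set.uIcc (-1 : ℝ) 1, σ * t - (m : ℝ) * Real.pi ≠ 0 := by
  intro t ht
  rw [Set.uIcc_of_le (by norm_num : (-1:ℝ) ≤ 1)] at ht
  have h1 : |σ * t| ≤ σ := by
    rw [abs_mul, abs_of_pos hσ]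
    nlinarith [abs_le.2 ⟨ht.1, ht.2⟩]
  have h2 : |(m : ℝ) * Real.pi| = |(m : ℝ)| * Real.pi := by
    rw [abs_mul, abs_of_pos Real.pi_pos]
  intro h
  have : σ * t = (m : ℝ) * Real.pi := by linarith
  rw [this, h2] at h1
  linarith

lemma psiT_eqOn (σ : ℝ) (hσ : 0 < σ) (m : ℤ) (hm : σ < |(m : ℝ)| * Real.pi) :
    Set.EqOn (psiT σ m)
      (fun t => Real.sqrt (σ / Real.pi) * Real.sin (σ * t - m * Real.pi) / (σ * t - m * Real.pi))
      (Set.uIcc (-1 : ℝ) 1) := by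
  intro t ht
  simp only [psiT, if_neg (ne_on σ hσ m hm t ht)]

lemma psiT_contOn (σ : ℝ) (hσ : 0 < σ) (m : ℤ) (hm : σ < |(m : ℝ)| * Real.pi) :
    ContinuousOn (psiT σ m) (Set.uIcc (-1 : ℝ) 1) := by
  refine ContinuousOn.congr ?_ (psiT_eqOn σ hσ m hm)
  exact ((continuousOn_const.mul ((Real.continuous_sin.comp (by continuity)).continuousOn)).div
    (by fun_prop) (ne_on σ hσ m hm))

lemma bound_integral (σ : ℝ) (hσ : 0 < σ) (m : ℤ) (hm : σ < |(m : ℝ)| * Real.pi) :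
    (∫ t in (-1:ℝ)..1, σ / Real.pi * ((σ * t - (m:ℝ) * Real.pi) ^ 2)⁻¹)
      = 2 * σ / (Real.pi * ((m : ℝ) ^ 2 * Real.pi ^ 2 - σ ^ 2)) := by
  set a : ℝ := (m : ℝ) * Real.pi with ha
  have haσ : σ < |a| := by rw [ha, abs_mul, abs_of_pos Real.pi_pos]; exact hm
  have h1 : a - σ ≠ 0 := by
    rcases abs_cases a with ⟨h, _⟩ | ⟨h, _⟩ <;> intro hc <;> nlinarith
  have h2 : a + σ ≠ 0 := by
    rcases abs_cases a with ⟨h, _⟩ | ⟨h, _⟩ <;> intro hc <;> nlinarith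
  have hσ' : σ ≠ 0 := ne_of_gt hσ
  have hne := ne_on σ hσ m hm
  have hderiv : ∀ t ∈ Set.uIcc (-1:ℝ) 1,
      HasDerivAt (fun t => -(σ⁻¹) * (σ * t - a)⁻¹) (((σ * t - a) ^ 2)⁻¹) t := by
    intro t ht
    have hlin : HasDerivAt (fun t : ℝ => σ * t - a) σ t := by
      simpa using ((hasDerivAt_id t).const_mul σ).sub_const a
    have hinv := hlin.inv (hne t ht)
    have := hinv.const_mul (-(σ⁻¹))
    exact this.congr_deriv (by field_simp)
  have hcont : IntervalIntegrable (fun t => ((σ * t - a) ^ 2)⁻¹) volume (-1) 1 := by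
    apply ContinuousOn.intervalIntegrable
    exact ContinuousOn.inv₀ (by fun_prop) (fun t ht => pow_ne_zero 2 (hne t ht))
  rw [intervalIntegral.integral_const_mul,
    intervalIntegral.integral_eq_sub_of_hasDerivAt hderiv hcont]
  have ha2 : (m : ℝ) ^ 2 * Real.pi ^ 2 = a ^ 2 := by rw [ha]; ring
  rw [ha2]
  clear_value a
  have hπ : Real.pi ≠ 0 := ne_of_gt Real.pi_pos
  have h3 : σ * 1 - a ≠ 0 := by intro hc; apply h1; linarith
  have h4 : σ * (-1) - a ≠ 0 := by intro hc; apply h2; linarith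
  have h5 : a ^ 2 - σ ^ 2 ≠ 0 := by
    have : σ ^ 2 < a ^ 2 := by nlinarith [abs_nonneg a, _root_.sq_abs a]
    linarith
  have h6 : -(σ * a) + σ ^ 2 ≠ 0 := by
    intro hc
    have h' : σ * (a - σ) = 0 := by linear_combination -hc
    rcases mul_eq_zero.1 h' with h | h
    · exact hσ' h
    · exact h1 h
  have h7 : -(σ * a) - σ ^ 2 ≠ 0 := by
    intro hc
    have h' : σ * (a + σ) = 0 := by linear_combination -hc
    rcases mul_eq_zero.1 h' with h | h
    · exact hσ' h
    · exact h2 h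
  field_simp [(by simpa using h3 : σ - a ≠ 0), (by simpa using h4 : -σ - a ≠ 0), h5]
  ring

lemma part1 (σ : ℝ) (hσ : 0 < σ) (m : ℤ) (hm : σ < |(m : ℝ)| * Real.pi) :
    (∫ t in (-1:ℝ)..1, (psiT σ m t) ^ 2)
      ≤ 2 * σ / (Real.pi * ((m : ℝ) ^ 2 * Real.pi ^ 2 - σ ^ 2)) := by
  have hne := ne_on σ hσ m hm
  have hsqnn : (0:ℝ) ≤ σ / Real.pi := div_nonneg hσ.le Real.pi_pos.le
  have hsq : Real.sqrt (σ / Real.pi) ^ 2 = σ / Real.pi := Real.sq_sqrt hsqnn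
  rw [← bound_integral σ hσ m hm]
  apply intervalIntegral.integral_mono_on (by norm_num)
  · exact (((psiT_contOn σ hσ m hm).pow 2)).intervalIntegrable
  · apply ContinuousOn.intervalIntegrable
    exact continuousOn_const.mul
      (ContinuousOn.inv₀ (by fun_prop) (fun t ht => pow_ne_zero 2 (hne t ht)))
  · intro t ht
    have ht' : t ∈ Set.uIcc (-1:ℝ) 1 := by
      rw [Set.uIcc_of_le (by norm_num : (-1:ℝ) ≤ 1)]; exact ht
    rw [psiT_eqOn σ hσ m hm ht']
    have hd := hne t ht'
    have hd2 : (0:ℝ) < (σ * t - (m:ℝ) * Real.pi) ^ 2 := by positivity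
    have hsin : Real.sin (σ * t - (m:ℝ) * Real.pi) ^ 2 ≤ 1 := Real.sin_sq_le_one _
    have : (Real.sqrt (σ / Real.pi) * Real.sin (σ * t - (m:ℝ) * Real.pi) /
        (σ * t - (m:ℝ) * Real.pi)) ^ 2
        = σ / Real.pi * (Real.sin (σ * t - (m:ℝ) * Real.pi) ^ 2 / (σ * t - (m:ℝ) * Real.pi) ^ 2) := by
      rw [div_pow, mul_pow, hsq]; ring
    rw [this]
    rw [div_eq_mul_inv]
    exact mul_le_mul_of_nonneg_left
      (mul_le_of_le_one_left (inv_pos.2 hd2).le hsin) hsqnn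

theorem sinc_translate_overlap_bound (σ : ℝ) (hσ : 0 < σ) :
    (∀ m : ℤ, σ < |(m : ℝ)| * Real.pi →
      (∫ t in (-1:ℝ)..1, (psiT σ m t) ^ 2)
        ≤ 2 * σ / (Real.pi * ((m : ℝ) ^ 2 * Real.pi ^ 2 - σ ^ 2))) ∧
    (∀ m n : ℤ, σ < |(m : ℝ)| * Real.pi → σ < |(n : ℝ)| * Real.pi →
      (∫ t in (-1:ℝ)..1, psiT σ m t * psiT σ n t) ^ 2
        ≤ (2 * σ / (Real.pi * ((m : ℝ) ^ 2 * Real.pi ^ 2 - σ ^ 2))) *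
          (2 * σ / (Real.pi * ((n : ℝ) ^ 2 * Real.pi ^ 2 - σ ^ 2)))) := by
  refine ⟨fun m hm => part1 σ hσ m hm, fun m n hm hn => ?_⟩
  have hcs := cs_interval (by norm_num : (-1:ℝ) ≤ 1)
    (((psiT_contOn σ hσ m hm).pow 2)).intervalIntegrable
    (((psiT_contOn σ hσ n hn).pow 2)).intervalIntegrable
    (((psiT_contOn σ hσ m hm).mul (psiT_contOn σ hσ n hn))).intervalIntegrable
  refine hcs.trans ?_
  have hm1 := part1 σ hσ m hm
  have hn1 := part1 σ hσ n hn
  have hnn : (0:ℝ) ≤ ∫ t in (-1:ℝ)..1, (psiT σ n t) ^ 2 :=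
    intervalIntegral.integral_nonneg (by norm_num) fun t _ => sq_nonneg _
  have hmm : (0:ℝ) ≤ ∫ t in (-1:ℝ)..1, (psiT σ m t) ^ 2 :=
    intervalIntegral.integral_nonneg (by norm_num) fun t _ => sq_nonneg _
  exact mul_le_mul hm1 hn1 hnn (hmm.trans hm1)
end
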